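/- arXiv:math/0411095 — 9 statements merged into one kernel-verified Lean document; each statement's English description precedes it below -/
import Mathlib

section
/- For every n ≥ 1, the expected value of (det M_n)^2 equals n!. -/
/-- The random sign matrix determined by a Boolean matrix: entries are `+1` or `-1`. -/
noncomputable def signMatrix (n : ℕ) (b : Fin n → Fin n → Bool) : Matrix (Fin n) (Fin n) ℝ :=
  Matrix.of fun i j => if b i j then (1 : ℝ) else -1

private noncomputable def sgn : Bool → ℝ := fun x => if x then (1 : ℝ) else -1

private lemma sgn_sq (x : Bool) : sgn x * sgn x = 1 := by cases x <;> simp [sgn]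

/-- Key computation: the sum over random matrices of the product of entries along two
permutations. -/
private lemma key (n : ℕ) (σ τ : Equiv.Perm (Fin n)) :
    (∑ b : Fin n → Fin n → Bool, ∏ i : Fin n, sgn (b (σ i) i) * sgn (b (τ i) i)) =
      if σ = τ then (2 : ℝ) ^ (n ^ 2) else 0 := by
  -- reindex the sum over `Fin n × Fin n → Bool`
  set h : Fin n × Fin n → Bool → ℝ := fun p x =>
    (if p.1 = σ p.2 then sgn x else 1) * (if p.1 = τ p.2 then sgn x else 1) with hh
  have step1 : ∀ c : Fin n → Fin n → Bool,
      (∏ i : Fin n, sgn (c (σ i) i) * sgn (c (τ i) i)) =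
        ∏ p : Fin n × Fin n, h p (c p.1 p.2) := by
    intro c
    rw [Fintype.prod_prod_type]
    rw [Finset.prod_comm]
    refine Finset.prod_congr rfl fun i _ => ?_
    simp only [hh]
    rw [Finset.prod_mul_distrib]
    congr 1
    · simp
    · simp
  have step2 :
      (∑ b : Fin n → Fin n → Bool, ∏ i : Fin n, sgn (b (σ i) i) * sgn (b (τ i) i)) =
        ∑ g : Fin n × Fin n → Bool, ∏ p : Fin n × Fin n, h p (g p) := by
    rw [← Equiv.sum_comp (Equiv.curry (Fin n) (Fin n) Bool).symm (fun g => ∏ p : Fin n × Fin n, h p (g p))]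
    refine Finset.sum_congr rfl fun b _ => ?_
    rw [step1 b]
    simp [Function.uncurry]
  rw [step2, ← Fintype.prod_sum h]
  by_cases hst : σ = τ
  · subst hst
    simp only [if_pos rfl]
    have : ∀ p : Fin n × Fin n, (∑ x : Bool, h p x) = 2 := by
      intro p
      by_cases hp : p.1 = σ p.2
      · simp [hh, hp, Fintype.sum_bool, sgn_sq, sgn]; norm_num
      · simp [hh, hp, Fintype.sum_bool]
    rw [Finset.prod_congr rfl fun p _ => this p]
    simp [sq, Fintype.card_prod]
  · rw [if_neg hst]
    obtain ⟨c, hc⟩ : ∃ c, σ c ≠ τ c := by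
      by_contra hcon
      push_neg at hcon
      exact hst (Equiv.ext hcon)
    refine Finset.prod_eq_zero (Finset.mem_univ (σ c, c)) ?_
    have : ∀ x : Bool, h (σ c, c) x = sgn x := by
      intro x
      simp [hh, hc]
    rw [Fintype.sum_bool]
    simp [this, sgn]

/-- The expected value of `(det M_n)^2` for a uniformly random `n × n` `±1` matrix is `n!`. -/
theorem expectation_det_sq_random_sign_matrix (n : ℕ) (hn : 1 ≤ n) :
    (∑ b : Fin n → Fin n → Bool, ((signMatrix n b).det) ^ 2) / 2 ^ (n ^ 2) =
      (Nat.factorial n : ℝ) := by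
  have hdet : ∀ b : Fin n → Fin n → Bool,
      (signMatrix n b).det ^ 2 =
        ∑ σ : Equiv.Perm (Fin n), ∑ τ : Equiv.Perm (Fin n),
          ((Equiv.Perm.sign σ : ℤ) : ℝ) * ((Equiv.Perm.sign τ : ℤ) : ℝ) *
            ∏ i : Fin n, sgn (b (σ i) i) * sgn (b (τ i) i) := by
    intro b
    have hentry : ∀ i j, signMatrix n b i j = sgn (b i j) := fun i j => rfl
    rw [sq, Matrix.det_apply, Finset.sum_mul_sum]
    refine Finset.sum_congr rfl fun σ _ => Finset.sum_congr rfl fun τ _ => ?_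
    simp only [hentry, Units.smul_def, zsmul_eq_mul]
    rw [Finset.prod_mul_distrib]
    ring
  have hsum : (∑ b : Fin n → Fin n → Bool, ((signMatrix n b).det) ^ 2) =
      (Nat.factorial n : ℝ) * 2 ^ (n ^ 2) := by
    calc (∑ b : Fin n → Fin n → Bool, ((signMatrix n b).det) ^ 2)
        = ∑ σ : Equiv.Perm (Fin n), ∑ τ : Equiv.Perm (Fin n),
            ((Equiv.Perm.sign σ : ℤ) : ℝ) * ((Equiv.Perm.sign τ : ℤ) : ℝ) *
              ∑ b : Fin n → Fin n → Bool,
                ∏ i : Fin n, sgn (b (σ i) i) * sgn (b (τ i) i) := by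
          rw [Finset.sum_congr rfl fun b _ => hdet b]
          rw [Finset.sum_comm]
          refine Finset.sum_congr rfl fun σ _ => ?_
          rw [Finset.sum_comm]
          refine Finset.sum_congr rfl fun τ _ => ?_
          rw [Finset.mul_sum]
      _ = ∑ σ : Equiv.Perm (Fin n), ∑ τ : Equiv.Perm (Fin n),
            ((Equiv.Perm.sign σ : ℤ) : ℝ) * ((Equiv.Perm.sign τ : ℤ) : ℝ) *
              (if σ = τ then (2 : ℝ) ^ (n ^ 2) else 0) := by
          refine Finset.sum_congr rfl fun σ _ => Finset.sum_congr rfl fun τ _ => ?_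
          rw [key n σ τ]
      _ = ∑ σ : Equiv.Perm (Fin n), (2 : ℝ) ^ (n ^ 2) := by
          refine Finset.sum_congr rfl fun σ _ => ?_
          have h1 : ((Equiv.Perm.sign σ : ℤ) : ℝ) * ((Equiv.Perm.sign σ : ℤ) : ℝ) = 1 := by
            have h2 := Int.units_mul_self (Equiv.Perm.sign σ)
            rw [← Int.cast_mul, ← Units.val_mul, h2]
            simp
          simp [mul_ite, mul_zero, Finset.sum_ite_eq, h1]
      _ = (Nat.factorial n : ℝ) * 2 ^ (n ^ 2) := by
          rw [Finset.sum_const, Finset.card_univ, Fintype.card_perm, nsmul_eq_mul]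
          simp [Fintype.card_fin]
  rw [hsum]
  field_simp
end

section
/- Let 0 ≤ d < n and let W be a d-dimensional linear subspace of ℝ^n. Then the probability that dist(X, W) = 0 (equivalently, that X ∈ W) is at most 2^{d−n}. -/
/-- The random sign vector determined by a Boolean vector: coordinates are `+1` or `-1`. -/
noncomputable def signVec (n : ℕ) (b : Fin n → Bool) : EuclideanSpace ℝ (Fin n) :=
  WithLp.toLp 2 (fun i => if b i then (1 : ℝ) else -1)

/-- Odlyzko's lemma: if `W` is a `d`-dimensional subspace of `ℝ^n` with `d < n`, then a
uniformly random `±1` vector lies in `W` with probability at most `2^(d-n)`. -/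
theorem prob_signVec_mem_subspace_le (n d : ℕ) (hd : d < n)
    (W : Submodule ℝ (EuclideanSpace ℝ (Fin n))) (hW : Module.finrank ℝ W = d) :
    (Nat.card {b : Fin n → Bool // signVec n b ∈ W} : ℝ) / 2 ^ n ≤
      (2 : ℝ) ^ ((d : ℤ) - (n : ℤ)) := by
  classical
  have hfinW : FiniteDimensional ℝ W := by
    have : FiniteDimensional ℝ (EuclideanSpace ℝ (Fin n)) := by infer_instance
    infer_instance
  -- coordinate functionals on W
  set φ : Fin n → Module.Dual ℝ W :=
    fun i => (EuclideanSpace.proj i).toLinearMap.comp W.subtype with hφ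
  obtain ⟨s, hs_sub, hs_span, hs_li⟩ := exists_linearIndependent ℝ (Set.range φ)
  have hs_fin : s.Finite := hs_li.setFinite
  haveI : Fintype s := hs_fin.fintype
  -- cardinality of s is at most d
  have hcard : s.toFinset.card ≤ d := by
    have h1 : Module.finrank ℝ (Submodule.span ℝ s) = s.toFinset.card :=
      finrank_span_set_eq_card hs_li
    have h2 : Module.finrank ℝ (Submodule.span ℝ s) ≤
        Module.finrank ℝ (Module.Dual ℝ W) := Submodule.finrank_le _
    rw [Subspace.dual_finrank_eq, hW] at h2
    omega
  -- key injectivity: if w ∈ W vanishes on all functionals in s, then w = 0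
  have hkey : ∀ w : W, (∀ f ∈ s, f w = 0) → w = 0 := by
    intro w hw
    have hmem : w ∈ (Submodule.span ℝ s).dualCoannihilator := by
      rw [Submodule.mem_dualCoannihilator]
      intro f hf
      induction hf using Submodule.span_induction with
      | mem f hf => exact hw f hf
      | zero => simp
      | add f g _ _ hf hg => simp [hf, hg]
      | smul c f _ hf => simp [hf]
    rw [hs_span] at hmem
    rw [Submodule.mem_dualCoannihilator] at hmem
    have hcoord : ∀ i : Fin n, (w : EuclideanSpace ℝ (Fin n)) i = 0 := by
      intro i
      have := hmem (φ i) (Submodule.subset_span ⟨i, rfl⟩)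
      simpa [hφ] using this
    ext i
    exact hcoord i
  -- choice of indices for functionals in s
  have hchoice : ∀ f : s, ∃ i : Fin n, φ i = (f : Module.Dual ℝ W) := fun f => hs_sub f.2
  choose c hc using hchoice
  -- the injection
  have hinj : Function.Injective
      (fun b : {b : Fin n → Bool // signVec n b ∈ W} => fun f : s => b.1 (c f)) := by
    intro b b' hbb
    have hvec : signVec n b.1 = signVec n b'.1 := by
      have hwmem : signVec n b.1 - signVec n b'.1 ∈ W := W.sub_mem b.2 b'.2
      have := hkey (⟨signVec n b.1, b.2⟩ - ⟨signVec n b'.1, b'.2⟩) ?_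
      · have h0 := congrArg (Subtype.val) this
        simp only [AddSubgroupClass.coe_sub, ZeroMemClass.coe_zero] at h0
        exact sub_eq_zero.mp h0
      · intro f hf
        have heq : b.1 (c ⟨f, hf⟩) = b'.1 (c ⟨f, hf⟩) := congrFun hbb ⟨f, hf⟩
        have : φ (c ⟨f, hf⟩) (⟨signVec n b.1, b.2⟩ - ⟨signVec n b'.1, b'.2⟩) = 0 := by
          simp only [hφ, map_sub]
          simp only [LinearMap.comp_apply, Submodule.coe_subtype]
          show (signVec n b.1) (c ⟨f, hf⟩) - (signVec n b'.1) (c ⟨f, hf⟩) = 0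
          simp [signVec, heq]
        rwa [hc ⟨f, hf⟩] at this
    ext i
    have := congrArg (fun v : EuclideanSpace ℝ (Fin n) => v i) hvec
    simp only [signVec] at this
    by_cases h1 : b.1 i <;> by_cases h2 : b'.1 i <;> simp [h1, h2] at this ⊢ <;> norm_num at this
  -- counting
  have hNat : Nat.card {b : Fin n → Bool // signVec n b ∈ W} ≤ 2 ^ d := by
    calc Nat.card {b : Fin n → Bool // signVec n b ∈ W}
        ≤ Nat.card (s → Bool) := Nat.card_le_card_of_injective _ hinj
      _ = 2 ^ s.toFinset.card := by
          simp [Nat.card_eq_fintype_card, Set.toFinset_card]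
      _ ≤ 2 ^ d := Nat.pow_le_pow_right (by norm_num) hcard
  -- arithmetic
  have h2n : (0 : ℝ) < 2 ^ n := by positivity
  rw [div_le_iff₀ h2n]
  have : (2 : ℝ) ^ ((d : ℤ) - (n : ℤ)) * 2 ^ n = 2 ^ d := by
    rw [← zpow_natCast (2 : ℝ) n, ← zpow_natCast (2 : ℝ) d, ← zpow_add₀ (by norm_num : (2:ℝ) ≠ 0)]
    ring_nf
  rw [this]
  exact_mod_cast hNat
end

section
/- There is an absolute constant C > 0 such that the following holds: for every n ≥ 1, every 1 ≤ l ≤ n, and every proper linear subspace W of ℝ^n that is l-typical, the probability that dist(X, W) ≤ 1/(4n) is at most C/√l. -/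
open Finset

/-- A subspace `W ⊆ ℝ^n` is `l`-typical if every unit vector in `Wᗮ` has at least `l`
coordinates of absolute value at least `1/(2n)`. -/
def IsTypical (n l : ℕ) (W : Submodule ℝ (EuclideanSpace ℝ (Fin n))) : Prop :=
  ∀ w ∈ Wᗮ, ‖w‖ = 1 → l ≤ Nat.card {i : Fin n // 1 / (2 * (n : ℝ)) ≤ |w i|}

theorem cbsq : ∀ k : ℕ, Nat.centralBinom k ^ 2 * (2*k+1) ≤ 16 ^ k := by
  intro k
  induction k with
  | zero => simp [Nat.centralBinom]
  | succ k ih =>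
    have h := Nat.succ_mul_centralBinom_succ k
    have hle : (k+1)^2 * (Nat.centralBinom (k+1) ^ 2 * (2*(k+1)+1)) ≤ (k+1)^2 * 16^(k+1) := by
      have e : (k+1)^2 * (Nat.centralBinom (k+1) ^ 2 * (2*(k+1)+1))
          = ((k+1) * Nat.centralBinom (k+1))^2 * (2*k+3) := by ring
      rw [e, h]
      calc (2 * (2*k+1) * Nat.centralBinom k)^2 * (2*k+3)
          = (Nat.centralBinom k ^2 * (2*k+1)) * (4 * (2*k+1) * (2*k+3)) := by ring
        _ ≤ 16^k * (4 * (2*k+1) * (2*k+3)) := Nat.mul_le_mul_right _ ih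
        _ ≤ 16^k * (16 * (k+1)^2) := Nat.mul_le_mul_left _ (by nlinarith)
        _ = (k+1)^2 * 16^(k+1) := by ring
    exact Nat.le_of_mul_le_mul_left hle (by positivity)


theorem keylem : ∀ j : ℕ, (Nat.centralBinom j : ℝ) * Real.sqrt (2*j+1) ≤ 4 ^ j := by
  intro j
  have h := cbsq j
  have h16 : (16:ℝ)^j = ((4:ℝ)^j)^2 := by
    rw [← pow_mul, pow_mul']; norm_num
  have h' : ((Nat.centralBinom j : ℝ) * Real.sqrt (2*j+1))^2 ≤ ((4:ℝ)^j)^2 := by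
    have hs : Real.sqrt (2*j+1) ^ 2 = (2*j+1 : ℝ) := Real.sq_sqrt (by positivity)
    have hc : ((Nat.centralBinom j : ℝ)^2 * (2*j+1)) ≤ (16:ℝ)^j := by exact_mod_cast h
    rw [mul_pow, hs, ← h16]; exact hc
  have hnn : (0:ℝ) ≤ (Nat.centralBinom j : ℝ) * Real.sqrt (2*j+1) := by positivity
  nlinarith [pow_pos (show (0:ℝ) < 4 by norm_num) j]

theorem chooseHalf (m : ℕ) (hm : 1 ≤ m) :
    (m.choose (m/2) : ℝ) * Real.sqrt m ≤ 2 * 2 ^ m := by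
  have h4 : ∀ k : ℕ, (2:ℝ)^(2*k) = 4^k := by
    intro k; rw [pow_mul]; norm_num
  obtain ⟨k, hk | hk⟩ := Nat.even_or_odd' m
  · subst hk
    have hd : (2*k)/2 = k := by omega
    rw [hd, ← Nat.centralBinom_eq_two_mul_choose]
    have h1 : Real.sqrt ((2*k : ℕ) : ℝ) ≤ Real.sqrt (2*k+1) := by
      apply Real.sqrt_le_sqrt; push_cast; linarith
    have h2 : (Nat.centralBinom k : ℝ) * Real.sqrt ((2*k : ℕ) : ℝ) ≤ 4^k :=
      le_trans (mul_le_mul_of_nonneg_left h1 (by positivity)) (keylem k)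
    rw [h4 k]
    nlinarith [pow_pos (show (0:ℝ) < 4 by norm_num) k]
  · subst hk
    have hd : (2*k+1)/2 = k := by omega
    rw [hd]
    have hch : ((2*k+1).choose k : ℝ) ≤ 2 * Nat.centralBinom k := by
      rcases Nat.eq_zero_or_pos k with h0 | h0
      · subst h0; simp [Nat.centralBinom]
      · obtain ⟨j, rfl⟩ : ∃ j, k = j + 1 := ⟨k-1, by omega⟩
        have h1 : (2*(j+1)+1).choose (j+1) = (2*(j+1)).choose j + (2*(j+1)).choose (j+1) := by
          have e : 2*(j+1)+1 = (2*(j+1)) + 1 := by omega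
          rw [e, Nat.choose_succ_succ (2*(j+1)) j]
        have h2 := Nat.choose_le_centralBinom j (j+1)
        have h3 := Nat.choose_le_centralBinom (j+1) (j+1)
        have hn : (2*(j+1)+1).choose (j+1) ≤ 2 * Nat.centralBinom (j+1) := by
          rw [h1]; omega
        exact_mod_cast hn
    have hs : Real.sqrt ((2*k+1 : ℕ) : ℝ) = Real.sqrt (2*(k:ℝ)+1) := by push_cast; ring_nf
    rw [hs]
    have hsn : (0:ℝ) ≤ Real.sqrt (2*(k:ℝ)+1) := Real.sqrt_nonneg _
    calc ((2*k+1).choose k : ℝ) * Real.sqrt (2*(k:ℝ)+1)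
        ≤ (2 * Nat.centralBinom k) * Real.sqrt (2*(k:ℝ)+1) := by
          apply mul_le_mul_of_nonneg_right hch hsn
      _ = 2 * ((Nat.centralBinom k : ℝ) * Real.sqrt (2*(k:ℝ)+1)) := by ring
      _ ≤ 2 * 4^k := by linarith [keylem k]
      _ ≤ 2 * 2^(2*k+1) := by
          rw [pow_succ, h4 k]
          nlinarith [pow_pos (show (0:ℝ) < 4 by norm_num) k]


theorem LO_antichain {ι : Type*} [Fintype ι] [DecidableEq ι] (a : ι → ℝ) (r δ x : ℝ)
    (hr : ∀ i, r ≤ a i) (hrpos : 0 < r) (hδ : δ < r) :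
    IsAntichain (· ⊆ ·)
      ((univ.filter fun T : Finset ι => |2 * ∑ i ∈ T, a i - x| ≤ δ) : Set (Finset ι)) := by
  intro T hT T' hT' hne hsub
  simp only [coe_filter, Set.mem_setOf_eq, mem_univ, true_and] at hT hT'
  obtain ⟨j, hj⟩ : (T' \ T).Nonempty := by
    rw [sdiff_nonempty]
    intro h
    exact hne (le_antisymm hsub h)
  have hsum : ∑ i ∈ T, a i + ∑ i ∈ T' \ T, a i = ∑ i ∈ T', a i := by
    rw [add_comm]; exact Finset.sum_sdiff hsub
  have hone : r ≤ ∑ i ∈ T' \ T, a i :=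
    le_trans (hr j) (Finset.single_le_sum (fun i _ => le_trans hrpos.le (hr i)) hj)
  rw [abs_le] at hT hT'
  linarith

theorem LO_count {ι : Type*} [Fintype ι] [DecidableEq ι] (a : ι → ℝ) (r δ x : ℝ)
    (hr : ∀ i, r ≤ |a i|) (hrpos : 0 < r) (hδ : δ < r) :
    (univ.filter fun b : ι → Bool =>
        |∑ i, (if b i then a i else -a i) - x| ≤ δ).card
      ≤ (Fintype.card ι).choose (Fintype.card ι / 2) := by
  classical
  set y : ℝ := x + ∑ i, |a i| with hy
  set 𝒜 : Finset (Finset ι) :=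
    univ.filter fun T : Finset ι => |2 * ∑ i ∈ T, |a i| - y| ≤ δ with h𝒜
  have hanti : IsAntichain (· ⊆ ·) (𝒜 : Set (Finset ι)) :=
    LO_antichain (fun i => |a i|) r δ y hr hrpos hδ
  have hsperner := IsAntichain.sperner hanti
  refine le_trans ?_ hsperner
  apply Finset.card_le_card_of_injOn
    (fun b => univ.filter fun i => b i = decide (0 ≤ a i))
  · -- maps to 𝒜
    intro b hb
    simp only [mem_coe, mem_filter, mem_univ, true_and] at hb ⊢
    have key : ∑ i, (if b i then a i else -a i)
        = 2 * ∑ i ∈ univ.filter (fun i => b i = decide (0 ≤ a i)), |a i| - ∑ i, |a i| := by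
      have e1 : ∀ i : ι, (if b i then a i else -a i)
          = (if b i = decide (0 ≤ a i) then 2 * |a i| else 0) - |a i| := by
        intro i
        rcases le_or_gt 0 (a i) with h | h
        · have hd : decide (0 ≤ a i) = true := decide_eq_true h
          rw [hd, abs_of_nonneg h]
          cases hb' : b i <;> simp <;> ring
        · have hd : decide (0 ≤ a i) = false := decide_eq_false (not_le.mpr h)
          rw [hd, abs_of_neg h]
          cases hb' : b i <;> simp <;> ring
      rw [Finset.sum_congr rfl (fun i _ => e1 i), Finset.sum_sub_distrib]
      congr 1
      rw [← Finset.sum_filter, Finset.mul_sum]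
    rw [key] at hb
    have hmem : |2 * ∑ i ∈ univ.filter (fun i => b i = decide (0 ≤ a i)), |a i| - y| ≤ δ := by
      rw [hy]; convert hb using 2; ring
    simp only [h𝒜, mem_coe, mem_filter, mem_univ, true_and]
    exact hmem
  · -- injective
    intro b hb b' hb' heq
    funext i
    have := Finset.ext_iff.mp heq i
    simp only [mem_filter, mem_univ, true_and] at this
    cases hd : decide (0 ≤ a i)
    · rw [hd] at this
      cases h1 : b i <;> cases h2 : b' i <;> simp_all
    · rw [hd] at this
      cases h1 : b i <;> cases h2 : b' i <;> simp_all

theorem LO_count_subset {ι : Type*} [Fintype ι] [DecidableEq ι] (a : ι → ℝ) (s : Finset ι)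
    (r δ : ℝ) (hr : ∀ i ∈ s, r ≤ |a i|) (hrpos : 0 < r) (hδ : δ < r) :
    (univ.filter fun b : ι → Bool => |∑ i, (if b i then a i else -a i)| ≤ δ).card
      ≤ s.card.choose (s.card / 2) * 2 ^ (Fintype.card ι - s.card) := by
  classical
  set p : ι → Prop := fun i => i ∈ s with hp
  set e := Equiv.piEquivPiSubtypeProd p (fun _ => Bool) with he
  set F := univ.filter fun b : ι → Bool => |∑ i, (if b i then a i else -a i)| ≤ δ with hF
  have hcard := Finset.card_eq_sum_card_fiberwise
    (f := fun b => (e b).2) (s := F) (t := univ) (fun _ _ => mem_univ _)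
  rw [hcard]
  have hbound : ∀ g : {x // ¬ p x} → Bool,
      (F.filter fun b => (e b).2 = g).card ≤ s.card.choose (s.card / 2) := by
    intro g
    have hsub : Fintype.card {x // p x} = s.card := by simp [hp]
    rw [← hsub]
    set xg : ℝ := -∑ i : {x // ¬ p x}, (if g i then a i else -a i) with hxg
    set G : Finset ({x // p x} → Bool) := univ.filter
      (fun f : {x // p x} → Bool => |∑ i, (if f i then a i.1 else -a i.1) - xg| ≤ δ) with hG
    refine le_trans (Finset.card_le_card_of_injOn (t := G) (fun b => (e b).1) ?_ ?_) ?_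
    · intro b hb
      simp only [mem_coe, mem_filter, mem_univ, true_and, hF, hG] at hb ⊢
      obtain ⟨hb1, hb2⟩ := hb
      have hsplit : ∑ i, (if b i then a i else -a i)
          = ∑ i : {x // p x}, (if (e b).1 i then a i else -a i)
            + ∑ i : {x // ¬ p x}, (if g i then a i else -a i) := by
        rw [← hb2]
        have h0 := (Fintype.sum_subtype_add_sum_subtype p (fun i => if b i then a i else -a i)).symm
        convert h0 using 2 <;> congr! 
      show |∑ i : {x // p x}, (if (e b).1 i then a i else -a i) - xg| ≤ δ
      rw [hxg]
      have : ∑ i : {x // p x}, (if (e b).1 i then a i else -a i) - -∑ i : {x // ¬ p x}, (if g i then a i else -a i) = ∑ i, (if b i then a i else -a i) := by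
        rw [hsplit]; ring
      rw [this]; exact hb1
    · intro b hb b' hb' heq
      simp only [mem_coe, mem_filter] at hb hb'
      have : e b = e b' := Prod.ext heq (hb.2.trans hb'.2.symm)
      exact e.injective this
    · exact LO_count (fun i : {x // p x} => a i) r δ xg (fun i => hr i i.2) hrpos hδ
  calc ∑ g ∈ (univ : Finset ({x // ¬ p x} → Bool)), (F.filter fun b => (e b).2 = g).card
      ≤ ∑ g ∈ (univ : Finset ({x // ¬ p x} → Bool)), s.card.choose (s.card / 2) :=
        Finset.sum_le_sum (fun g _ => hbound g)
    _ = (Fintype.card ({x // ¬ p x} → Bool)) * s.card.choose (s.card / 2) := by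
        rw [Finset.sum_const, smul_eq_mul, Finset.card_univ]
    _ = s.card.choose (s.card / 2) * 2 ^ (Fintype.card ι - s.card) := by
        rw [Fintype.card_fun, Fintype.card_bool, Nat.mul_comm]
        congr 2
        simp [hp, Fintype.card_subtype_compl]

/-- If `W` is a proper `l`-typical subspace, then a uniformly random `±1` vector is within
distance `1/(4n)` of `W` with probability `O(1/√l)`. -/
theorem prob_signVec_close_typical_subspace :
    ∃ C > (0 : ℝ), ∀ n : ℕ, 1 ≤ n → ∀ l : ℕ, 1 ≤ l → l ≤ n →
      ∀ W : Submodule ℝ (EuclideanSpace ℝ (Fin n)), W ≠ ⊤ → IsTypical n l W →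
        (Nat.card {b : Fin n → Bool //
            Metric.infDist (signVec n b) (W : Set (EuclideanSpace ℝ (Fin n))) ≤
              1 / (4 * (n : ℝ))} : ℝ) / 2 ^ n ≤ C / Real.sqrt l := by
  classical
  refine ⟨2, by norm_num, ?_⟩
  intro n hn l hl hln W hW hTyp
  have hnR : (0:ℝ) < n := by exact_mod_cast hn
  -- obtain a unit normal vector
  have hWbot : Wᗮ ≠ ⊥ := fun h => hW (Submodule.orthogonal_eq_bot_iff.mp h)
  obtain ⟨w0, hw0mem, hw0ne⟩ := Submodule.exists_mem_ne_zero_of_ne_bot hWbot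
  set w : EuclideanSpace ℝ (Fin n) := ‖w0‖⁻¹ • w0 with hwdef
  have hwmem : w ∈ Wᗮ := Submodule.smul_mem _ _ hw0mem
  have hwnorm : ‖w‖ = 1 := norm_smul_inv_norm hw0ne
  have htyp := hTyp w hwmem hwnorm
  -- the set of large coordinates
  set S : Finset (Fin n) := univ.filter (fun i => 1 / (2 * (n:ℝ)) ≤ |w i|) with hS
  have hcardS : Nat.card {i : Fin n // 1 / (2 * (n:ℝ)) ≤ |w i|} = S.card := by
    rw [Nat.card_eq_fintype_card, Fintype.card_subtype]
  have hlS : l ≤ S.card := by rw [← hcardS]; exact htyp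
  obtain ⟨s, hs_sub, hs_card⟩ := Finset.exists_subset_card_eq hlS
  -- key pointwise bound
  set P : (Fin n → Bool) → Prop := fun b =>
    Metric.infDist (signVec n b) (W : Set (EuclideanSpace ℝ (Fin n))) ≤ 1 / (4 * (n:ℝ))
    with hP
  have hWne : (W : Set (EuclideanSpace ℝ (Fin n))).Nonempty := ⟨0, W.zero_mem⟩
  have key : ∀ b : Fin n → Bool, P b → |∑ i, (if b i then w i else -w i)| ≤ 1 / (4 * (n:ℝ)) := by
    intro b hb
    have hinner : (inner ℝ (signVec n b) w : ℝ) = ∑ i, (if b i then w i else -w i) := by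
      rw [PiLp.inner_apply]
      refine Finset.sum_congr rfl fun i _ => ?_
      simp only [RCLike.inner_apply, starRingEnd_apply, star_trivial, signVec]
      cases hbi : b i <;> simp <;> ring
    rw [← hinner]
    by_contra hcon
    push_neg at hcon
    obtain ⟨v, hvW, hvdist⟩ := (Metric.infDist_lt_iff hWne).mp (lt_of_le_of_lt hb hcon)
    have hvw : (inner ℝ v w : ℝ) = 0 := (Submodule.mem_orthogonal W w).mp hwmem v hvW
    have heq : (inner ℝ (signVec n b) w : ℝ) = inner ℝ (signVec n b - v) w := by
      rw [inner_sub_left, hvw]; ring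
    have hle : |(inner ℝ (signVec n b) w : ℝ)| ≤ dist (signVec n b) v := by
      rw [heq, dist_eq_norm]
      calc |(inner ℝ (signVec n b - v) w : ℝ)| ≤ ‖signVec n b - v‖ * ‖w‖ :=
            abs_real_inner_le_norm _ _
        _ = ‖signVec n b - v‖ := by rw [hwnorm, mul_one]
    linarith
  -- counting
  have hcount : Nat.card {b : Fin n → Bool // P b}
      ≤ l.choose (l / 2) * 2 ^ (n - l) := by
    rw [Nat.card_eq_fintype_card, Fintype.card_subtype]
    calc (univ.filter P).card
        ≤ (univ.filter fun b : Fin n → Bool =>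
            |∑ i, (if b i then w i else -w i)| ≤ 1 / (4 * (n:ℝ))).card := by
          apply Finset.card_le_card
          intro b hb
          simp only [mem_filter, mem_univ, true_and] at hb ⊢
          exact key b hb
      _ ≤ s.card.choose (s.card / 2) * 2 ^ (Fintype.card (Fin n) - s.card) := by
          apply LO_count_subset (fun i => w i) s (1 / (2 * (n:ℝ)))
          · intro i hi
            have := hs_sub hi
            rw [hS, mem_filter] at this
            exact this.2
          · positivity
          · rw [div_lt_div_iff₀ (by positivity) (by positivity)]
            nlinarith
      _ = l.choose (l / 2) * 2 ^ (n - l) := by rw [hs_card, Fintype.card_fin]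
  -- final arithmetic
  have hsl : (0:ℝ) < Real.sqrt l := Real.sqrt_pos.mpr (by exact_mod_cast hl)
  have h2n : (0:ℝ) < 2 ^ n := by positivity
  rw [div_le_div_iff₀ h2n hsl]
  have hNR : (Nat.card {b : Fin n → Bool // P b} : ℝ) ≤ (l.choose (l / 2) : ℝ) * 2 ^ (n - l) := by
    exact_mod_cast hcount
  have hpow : (2:ℝ) ^ (n - l) * 2 ^ l = 2 ^ n := by
    rw [← pow_add, Nat.sub_add_cancel hln]
  have hch := chooseHalf l hl
  calc (Nat.card {b : Fin n → Bool // P b} : ℝ) * Real.sqrt l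
      ≤ ((l.choose (l / 2) : ℝ) * 2 ^ (n - l)) * Real.sqrt l := by
        apply mul_le_mul_of_nonneg_right hNR (Real.sqrt_nonneg _)
    _ = ((l.choose (l / 2) : ℝ) * Real.sqrt l) * 2 ^ (n - l) := by ring
    _ ≤ (2 * 2 ^ l) * 2 ^ (n - l) := by
        apply mul_le_mul_of_nonneg_right hch (by positivity)
    _ = 2 * 2 ^ n := by rw [mul_assoc, mul_comm ((2:ℝ)^l), hpow]
end

section
/- There is an absolute constant C > 0 such that the following holds: let k ≥ 1, let a_1, ..., a_k be real numbers with |a_i| > 1 for all i, let ε_1, ..., ε_k be i.i.d. random variables taking the values +1 and −1 each with probability 1/2, and let I ⊆ ℝ be an interval of length at most one. Then the probability that Σ_{i=1}^k a_i ε_i lies in I is at most C/√k. -/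
/-! Erdős' argument. Replacing `a i` by `|a i|` and flipping the corresponding sign, a sign
vector becomes the set `S` of indices carrying `+`, with sum `2 ∑_{i ∈ S} |a i| - ∑_i |a i|`.
If `S ⊊ T`, the two sums differ by `2 ∑_{i ∈ T \ S} |a i| > 2`, so they cannot both lie in an
interval of length at most one: the sets landing in the interval form an antichain, and Sperner's
theorem bounds their number by `C(k, ⌊k/2⌋) ≤ 2^k / √k`. -/

open Finset

namespace Nat

theorem centralBinom_sq_mul_le (n : ℕ) : centralBinom n ^ 2 * (2 * n + 1) ≤ 16 ^ n := by
  induction n with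
  | zero => simp
  | succ n ih =>
    have hratio : 4 * (2 * n + 1) * (2 * n + 3) ≤ 16 * (n + 1) ^ 2 := by nlinarith
    refine Nat.le_of_mul_le_mul_left ?_ (by positivity : 0 < (n + 1) ^ 2)
    calc (n + 1) ^ 2 * (centralBinom (n + 1) ^ 2 * (2 * (n + 1) + 1))
        = ((n + 1) * centralBinom (n + 1)) ^ 2 * (2 * n + 3) := by ring
      _ = 4 * (2 * n + 1) * (2 * n + 3) * (centralBinom n ^ 2 * (2 * n + 1)) := by
          rw [succ_mul_centralBinom_succ]; ring
      _ ≤ 16 * (n + 1) ^ 2 * 16 ^ n := Nat.mul_le_mul hratio ih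
      _ = (n + 1) ^ 2 * 16 ^ (n + 1) := by ring

theorem choose_half_sq_mul_le (k : ℕ) : k.choose (k / 2) ^ 2 * (k + 1) ≤ 4 ^ k := by
  obtain ⟨n, rfl | rfl⟩ := k.even_or_odd'
  · rw [Nat.mul_div_cancel_left n two_pos, ← centralBinom_eq_two_mul_choose, pow_mul]
    exact centralBinom_sq_mul_le n
  · have hhalf : (2 * n + 1) / 2 = n := by omega
    have hdouble : 2 * (2 * n + 1).choose n = centralBinom (n + 1) := by
      rw [centralBinom_eq_two_mul_choose, show 2 * (n + 1) = 2 * n + 1 + 1 by ring,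
        choose_succ_succ, choose_symm_half, two_mul]
    refine Nat.le_of_mul_le_mul_left ?_ (by norm_num : 0 < 4)
    calc 4 * ((2 * n + 1).choose ((2 * n + 1) / 2) ^ 2 * (2 * n + 1 + 1))
        = centralBinom (n + 1) ^ 2 * (2 * n + 2) := by rw [hhalf, ← hdouble]; ring
      _ ≤ centralBinom (n + 1) ^ 2 * (2 * (n + 1) + 1) := Nat.mul_le_mul_left _ (by omega)
      _ ≤ 16 ^ (n + 1) := centralBinom_sq_mul_le (n + 1)
      _ = 4 * 4 ^ (2 * n + 1) := by rw [show 16 = 4 ^ 2 by rfl, ← pow_mul]; ring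

theorem choose_half_mul_sqrt_le (k : ℕ) : (k.choose (k / 2) : ℝ) * √k ≤ 2 ^ k := by
  have h : (k.choose (k / 2) : ℝ) ^ 2 * (k + 1) ≤ 4 ^ k := by
    exact_mod_cast choose_half_sq_mul_le k
  refine (pow_le_pow_iff_left₀ (by positivity) (by positivity) two_ne_zero).1 ?_
  calc ((k.choose (k / 2) : ℝ) * √k) ^ 2 = (k.choose (k / 2) : ℝ) ^ 2 * k := by
        rw [mul_pow, Real.sq_sqrt k.cast_nonneg]
    _ ≤ (k.choose (k / 2) : ℝ) ^ 2 * (k + 1) := by gcongr; linarith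
    _ ≤ 4 ^ k := h
    _ = (2 ^ k) ^ 2 := by rw [← pow_mul, mul_comm, pow_mul]; norm_num

end Nat

section SignedSum

variable {ι : Type*} [Fintype ι] [DecidableEq ι]

def signedSum (w : ι → ℝ) (S : Finset ι) : ℝ := ∑ i, (if i ∈ S then 1 else -1) * w i

theorem signedSum_eq (w : ι → ℝ) (S : Finset ι) :
    signedSum w S = 2 * ∑ i ∈ S, w i - ∑ i, w i := by
  have h (i : ι) : (if i ∈ S then 1 else -1) * w i = 2 * (if i ∈ S then w i else 0) - w i := by
    split_ifs <;> ring
  simp only [signedSum, h, sum_sub_distrib, ← mul_sum, sum_ite_mem, univ_inter]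

theorem signedSum_sub_signedSum_of_subset (w : ι → ℝ) {S T : Finset ι} (h : S ⊆ T) :
    signedSum w T - signedSum w S = 2 * ∑ i ∈ T \ S, w i := by
  rw [signedSum_eq, signedSum_eq, ← sum_sdiff h]
  ring

theorem isAntichain_signedSum_mem_Icc {w : ι → ℝ} {x y : ℝ} (hw : ∀ i, y - x < 2 * w i) :
    IsAntichain (· ⊆ ·) (SetLike.coe (univ.filter fun S => signedSum w S ∈ Set.Icc x y)) := by
  intro S hS T hT hne hST
  simp only [coe_filter, mem_univ, true_and, Set.mem_ofPred_eq, Set.mem_Icc] at hS hT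
  obtain ⟨j, hj⟩ := sdiff_nonempty.2 fun hTS => hne (hST.antisymm hTS)
  have hxy : x ≤ y := hS.1.trans hS.2
  have hw_pos : ∀ i, 0 < w i := fun i => by linarith [hw i]
  have : 2 * w j ≤ signedSum w T - signedSum w S := by
    rw [signedSum_sub_signedSum_of_subset w hST]
    gcongr
    exact single_le_sum (fun i _ => (hw_pos i).le) hj
  linarith [hw j]

theorem card_signedSum_mem_Icc_le {w : ι → ℝ} {x y : ℝ} (hw : ∀ i, y - x < 2 * w i) :
    #(univ.filter fun S => signedSum w S ∈ Set.Icc x y) ≤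
      (Fintype.card ι).choose (Fintype.card ι / 2) :=
  (isAntichain_signedSum_mem_Icc hw).sperner

end SignedSum

section SignVector

variable {ι : Type*} [Fintype ι]

noncomputable def alignedSet (a : ι → ℝ) (b : ι → Bool) : Finset ι :=
  univ.filter fun i => b i = decide (0 ≤ a i)

theorem alignedSet_injective (a : ι → ℝ) : Function.Injective (alignedSet a) := by
  intro b b' h
  funext i
  have hi : b i = decide (0 ≤ a i) ↔ b' i = decide (0 ≤ a i) := by
    simpa [alignedSet] using congrArg (i ∈ ·) h
  revert hi
  cases b i <;> cases b' i <;> cases decide (0 ≤ a i) <;> simp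

theorem sum_sign_mul_eq_signedSum_abs [DecidableEq ι] (a : ι → ℝ) (b : ι → Bool) :
    ∑ i, (if b i then (1 : ℝ) else -1) * a i = signedSum (fun i => |a i|) (alignedSet a b) := by
  refine sum_congr rfl fun i _ => ?_
  rcases le_or_gt 0 (a i) with ha | ha
  · cases hb : b i <;> simp [alignedSet, hb, ha, abs_of_nonneg ha]
  · cases hb : b i <;> simp [alignedSet, hb, ha.not_ge, abs_of_neg ha]

theorem card_sum_sign_mul_mem_Icc_le [DecidableEq ι] {a : ι → ℝ} {x y : ℝ}
    (ha : ∀ i, y - x < 2 * |a i|) :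
    Nat.card {b : ι → Bool // (∑ i, (if b i then (1 : ℝ) else -1) * a i) ∈ Set.Icc x y} ≤
      (Fintype.card ι).choose (Fintype.card ι / 2) := by
  calc Nat.card {b : ι → Bool // (∑ i, (if b i then (1 : ℝ) else -1) * a i) ∈ Set.Icc x y}
      ≤ Nat.card {S : Finset ι // signedSum (fun i => |a i|) S ∈ Set.Icc x y} := by
        refine Nat.card_le_card_of_injective (fun b => ⟨alignedSet a b, ?_⟩) ?_
        · rw [← sum_sign_mul_eq_signedSum_abs]; exact b.2
        · intro b b' h
          exact Subtype.ext (alignedSet_injective a (congrArg Subtype.val h))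
    _ = #(univ.filter fun S => signedSum (fun i => |a i|) S ∈ Set.Icc x y) := by
        rw [Nat.card_eq_fintype_card, Fintype.card_subtype]
    _ ≤ (Fintype.card ι).choose (Fintype.card ι / 2) := card_signedSum_mem_Icc_le ha

end SignVector

/-- The Erdős form of the Littlewood–Offord lemma: if `|a_i| > 1` for all `i` and
`ε_1, …, ε_k` are i.i.d. uniform `±1` signs, then for any interval `I` of length at most one,
`P(Σ a_i ε_i ∈ I) = O(1/√k)`. -/
theorem littlewood_offord_erdos :
    ∃ C > (0 : ℝ), ∀ k : ℕ, 1 ≤ k → ∀ a : Fin k → ℝ, (∀ i, 1 < |a i|) →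
      ∀ x y : ℝ, y - x ≤ 1 →
        (Nat.card {b : Fin k → Bool //
            (∑ i, (if b i then (1 : ℝ) else -1) * a i) ∈ Set.Icc x y} : ℝ) / 2 ^ k ≤
          C / Real.sqrt k := by
  refine ⟨1, one_pos, fun k hk a ha x y hxy => ?_⟩
  have hcard := card_sum_sign_mul_mem_Icc_le (a := a) (x := x) (y := y)
    fun i => by linarith [ha i]
  rw [Fintype.card_fin] at hcard
  have hsqrt : 0 < √(k : ℝ) := Real.sqrt_pos.2 (by exact_mod_cast hk)
  rw [div_le_div_iff₀ (by positivity) hsqrt, one_mul]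
  calc _ ≤ (k.choose (k / 2) : ℝ) * √k := by gcongr
    _ ≤ 2 ^ k := Nat.choose_half_mul_sqrt_le k
end

section
/- For every δ > 0 there exists N such that for all n ≥ N the following holds: let X_1, ..., X_n be independent random vectors each chosen uniformly at random from {−1,1}^n. Then P(X_1, ..., X_n are linearly dependent) ≤ 2^{δn} · P(X_1, ..., X_n span a hyperplane of ℝ^n). (That is, the probability of linear dependence is at most N^{o(1)} times the probability of spanning an (n−1)-dimensional subspace, where N = 2^n.) -/
open Submodule Module Set


namespace Aux

variable {n : ℕ}

lemma signVec_injective (n : ℕ) : Function.Injective (signVec n) := by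
  intro b c h
  funext i
  have := congrArg (fun v : EuclideanSpace ℝ (Fin n) => v i) h
  simp only [signVec] at this
  cases hb : b i <;> cases hc : c i <;> simp [hb, hc] at this ⊢ <;> norm_num at this

/-- coordinate injectivity on a subspace -/
lemma exists_coords (V : Submodule ℝ (EuclideanSpace ℝ (Fin n))) :
    ∃ S : Finset (Fin n), S.card ≤ finrank ℝ V ∧
      ∀ v ∈ V, ∀ w ∈ V, (∀ i ∈ S, v i = w i) → v = w := by
  classical
  haveI : FiniteDimensional ℝ V := inferInstance
  let ev : Fin n → Module.Dual ℝ V := fun i =>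
    { toFun := fun v => (v : EuclideanSpace ℝ (Fin n)) i
      map_add' := fun x y => rfl
      map_smul' := fun c x => rfl }
  obtain ⟨s, hsub, hspan, hind⟩ := exists_linearIndependent ℝ (Set.range ev)
  have hfin : s.Finite := hind.setFinite
  haveI : Fintype s := hfin.fintype
  have hcard1 : s.toFinset.card = finrank ℝ (span ℝ s) :=
    (finrank_span_set_eq_card hind).symm
  have hcard : s.toFinset.card ≤ finrank ℝ V := by
    rw [hcard1]
    calc finrank ℝ (span ℝ s) ≤ finrank ℝ (Module.Dual ℝ V) := Submodule.finrank_le _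
      _ = finrank ℝ V := Subspace.dual_finrank_eq
  have hchoice : ∀ φ ∈ s.toFinset, ∃ i, ev i = φ := by
    intro φ hφ
    exact hsub (Set.mem_toFinset.mp hφ)
  choose g hg using hchoice
  refine ⟨s.toFinset.attach.image (fun p => g p.1 p.2), ?_, ?_⟩
  · calc (s.toFinset.attach.image (fun p => g p.1 p.2)).card
        ≤ s.toFinset.attach.card := Finset.card_image_le
      _ = s.toFinset.card := Finset.card_attach
      _ ≤ _ := hcard
  · intro v hv w hw hagree
    have husub : v - w ∈ V := sub_mem hv hw
    have h1 : ∀ φ ∈ s, φ ⟨v - w, husub⟩ = 0 := by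
      intro φ hφ
      have hφ' : φ ∈ s.toFinset := Set.mem_toFinset.mpr hφ
      have hi : g φ hφ' ∈ s.toFinset.attach.image (fun p => g p.1 p.2) :=
        Finset.mem_image.mpr ⟨⟨φ, hφ'⟩, Finset.mem_attach _ _, rfl⟩
      have := hagree _ hi
      have h2 : ev (g φ hφ') ⟨v - w, husub⟩ = 0 := by
        show (v - w) (g φ hφ') = 0
        have : v (g φ hφ') - w (g φ hφ') = 0 := by rw [this]; ring
        exact this
      rw [hg φ hφ'] at h2
      exact h2
    have h2 : ∀ φ ∈ span ℝ s, φ ⟨v - w, husub⟩ = 0 := by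
      intro φ hφ
      induction hφ using Submodule.span_induction with
      | mem φ hφ => exact h1 _ hφ
      | zero => rfl
      | add φ ψ _ _ h h' => simp [LinearMap.add_apply, h, h']
      | smul c φ _ h => simp [LinearMap.smul_apply, h]
    have h3 : ∀ i, (v - w) i = 0 := by
      intro i
      have : ev i ∈ span ℝ s := by
        rw [hspan]
        exact subset_span (Set.mem_range_self i)
      exact h2 _ this
    have : v - w = 0 := by ext i; simpa using h3 i
    exact sub_eq_zero.mp this

end Aux

namespace Aux

lemma odlyzko {n : ℕ} (V : Submodule ℝ (EuclideanSpace ℝ (Fin n))) :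
    Nat.card {b : Fin n → Bool // signVec n b ∈ V} ≤ 2 ^ (finrank ℝ V) := by
  classical
  obtain ⟨S, hcard, hinj⟩ := exists_coords V
  have hI : Function.Injective
      (fun (b : {b : Fin n → Bool // signVec n b ∈ V}) => (fun i : S => b.1 i.1)) := by
    intro b c h
    have : signVec n b.1 = signVec n c.1 := by
      apply hinj _ b.2 _ c.2
      intro i hi
      have := congrFun h ⟨i, hi⟩
      simp only [signVec] at *
      rw [this]
    exact Subtype.ext (signVec_injective n this)
  calc Nat.card {b : Fin n → Bool // signVec n b ∈ V}
      ≤ Nat.card (S → Bool) := Nat.card_le_card_of_injective _ hI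
    _ = 2 ^ S.card := by
        simp [Nat.card_eq_fintype_card, Fintype.card_fun]
    _ ≤ 2 ^ finrank ℝ V := Nat.pow_le_pow_right (by norm_num) hcard

/-- Finset version of Odlyzko -/
lemma odlyzko' {n : ℕ} (V : Submodule ℝ (EuclideanSpace ℝ (Fin n))) [DecidablePred (fun b : Fin n → Bool => signVec n b ∈ V)] :
    (Finset.univ.filter (fun b : Fin n → Bool => signVec n b ∈ V)).card ≤ 2 ^ (finrank ℝ V) := by
  classical
  have := odlyzko V
  rwa [Nat.card_eq_fintype_card, Fintype.card_subtype] at this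

end Aux

namespace Aux

variable {K : Type*} {M : Type*} [Field K] [AddCommGroup M] [Module K M]

lemma exists_redundant {ι : Type*} [Fintype ι] {v : ι → M}
    (h : ¬ LinearIndependent K v) : ∃ j, v j ∈ span K (v '' {j}ᶜ) := by
  classical
  rw [Fintype.linearIndependent_iff] at h
  push_neg at h
  obtain ⟨g, hsum, j, hj⟩ := h
  have hterm : ∀ i ∈ Finset.univ.erase j, g i • v i ∈ span K (v '' {j}ᶜ) := by
    intro i hi
    have : v i ∈ v '' {j}ᶜ :=
      Set.mem_image_of_mem v (by simpa using (Finset.mem_erase.mp hi).1)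
    exact smul_mem _ _ (subset_span this)
  have hsum' : ∑ i ∈ Finset.univ.erase j, g i • v i ∈ span K (v '' {j}ᶜ) :=
    Submodule.sum_mem _ hterm
  have heq : g j • v j = -∑ i ∈ Finset.univ.erase j, g i • v i := by
    have := Finset.add_sum_erase Finset.univ (fun i => g i • v i) (Finset.mem_univ j)
    rw [hsum] at this
    exact eq_neg_of_add_eq_zero_left this
  have : g j • v j ∈ span K (v '' {j}ᶜ) := by
    rw [heq]; exact neg_mem hsum'
  refine ⟨j, ?_⟩
  have := smul_mem (span K (v '' {j}ᶜ)) (g j)⁻¹ this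
  rwa [inv_smul_smul₀ hj] at this

lemma range_eq_insert {ι : Type*} (v : ι → M) (j : ι) :
    Set.range v = insert (v j) (v '' {j}ᶜ) := by
  ext x
  constructor
  · rintro ⟨i, rfl⟩
    by_cases hij : i = j
    · subst hij; exact Set.mem_insert _ _
    · exact Set.mem_insert_of_mem _ (Set.mem_image_of_mem v hij)
  · rintro (rfl | ⟨i, _, rfl⟩) <;> exact Set.mem_range_self _

lemma span_range_eq_sup {ι : Type*} (v : ι → M) (j : ι) :
    span K (Set.range v) = span K (v '' {j}ᶜ) ⊔ span K {v j} := by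
  rw [range_eq_insert v j, Submodule.span_insert, sup_comm]

lemma span_range_eq_of_mem {ι : Type*} {v : ι → M} {j : ι}
    (h : v j ∈ span K (v '' {j}ᶜ)) :
    span K (Set.range v) = span K (v '' {j}ᶜ) := by
  rw [span_range_eq_sup v j, sup_eq_left]
  rwa [span_le, Set.singleton_subset_iff]

lemma finrank_sup_span_singleton {V : Submodule K M} [FiniteDimensional K V] {u : M}
    (hu : u ∉ V) : finrank K ((V ⊔ span K {u} : Submodule K M) : Submodule K M) = finrank K V + 1 := by
  have hu0 : u ≠ 0 := fun h => hu (h ▸ zero_mem V)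

  have hinf : V ⊓ span K {u} = ⊥ := by
    rw [eq_bot_iff]
    rintro x ⟨hxV, hxu⟩
    obtain ⟨c, rfl⟩ := Submodule.mem_span_singleton.mp hxu
    by_cases hc : c = 0
    · simp [hc]
    · exact ((hu (show u ∈ V by
        have := smul_mem V c⁻¹ hxV
        rwa [inv_smul_smul₀ hc] at this))).elim
  have := Submodule.finrank_sup_add_finrank_inf_eq V (span K {u})
  rw [hinf, finrank_bot, finrank_span_singleton hu0] at this
  omega

end Aux

namespace Aux

lemma image_compl_update {ι α : Type*} [DecidableEq ι] (v : ι → α) (j : ι) (u : α) :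
    Function.update v j u '' {j}ᶜ = v '' {j}ᶜ := by
  ext x
  simp only [Set.mem_image, Set.mem_compl_iff, Set.mem_singleton_iff]
  constructor
  · rintro ⟨i, hi, rfl⟩
    exact ⟨i, hi, by rw [Function.update_of_ne hi]⟩
  · rintro ⟨i, hi, rfl⟩
    exact ⟨i, hi, by rw [Function.update_of_ne hi]⟩

variable {n : ℕ}

noncomputable def rows (b : Fin n → Fin n → Bool) : Fin n → EuclideanSpace ℝ (Fin n) :=
  fun i => signVec n (b i)

noncomputable def rk (b : Fin n → Fin n → Bool) : ℕ :=
  finrank ℝ (span ℝ (Set.range (rows b)))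

lemma rk_le (b : Fin n → Fin n → Bool) : rk b ≤ n := by
  calc rk b ≤ finrank ℝ (EuclideanSpace ℝ (Fin n)) := Submodule.finrank_le _
    _ = n := finrank_euclideanSpace_fin

lemma indep_iff_rk (b : Fin n → Fin n → Bool) :
    LinearIndependent ℝ (rows b) ↔ rk b = n := by
  rw [linearIndependent_iff_card_eq_finrank_span]
  unfold Set.finrank rk
  simp [eq_comm]

lemma rows_update (b : Fin n → Fin n → Bool) (j : Fin n) (y : Fin n → Bool) :
    rows (Function.update b j y) = Function.update (rows b) j (signVec n y) := by
  funext i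
  by_cases h : i = j
  · subst h; simp [rows, Function.update_self]
  · simp [rows, Function.update_of_ne h]

lemma rk_update {b : Fin n → Fin n → Bool} {j : Fin n} {y : Fin n → Bool}
    (hj : rows b j ∈ span ℝ (rows b '' {j}ᶜ))
    (hy : signVec n y ∉ span ℝ (Set.range (rows b))) :
    rk (Function.update b j y) = rk b + 1 := by
  have hspan0 : span ℝ (Set.range (rows b)) = span ℝ (rows b '' {j}ᶜ) :=
    span_range_eq_of_mem hj
  unfold rk
  rw [rows_update, span_range_eq_sup _ j, image_compl_update, Function.update_self,
    ← hspan0, finrank_sup_span_singleton hy]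

lemma finrank_compl_of_not_mem {b : Fin n → Fin n → Bool} {j : Fin n}
    (h : rows b j ∉ span ℝ (rows b '' {j}ᶜ)) :
    finrank ℝ (span ℝ (rows b '' {j}ᶜ)) + 1 = rk b := by
  unfold rk
  rw [span_range_eq_sup (rows b) j, finrank_sup_span_singleton h]

end Aux

namespace Aux

variable {n : ℕ}

def Dmem (r : ℕ) (p : (Fin n → Fin n → Bool) × (Fin n → Bool)) : Prop :=
  rk p.1 = r ∧ signVec n p.2 ∉ span ℝ (Set.range (rows p.1))

def Tmem (r : ℕ) (q : (Fin n → Fin n → Bool) × (Fin n × (Fin n → Bool))) : Prop :=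
  rk q.1 = r + 1 ∧ signVec n q.2.2 ∈ span ℝ (rows q.1 '' {q.2.1}ᶜ) ∧
    rows q.1 q.2.1 ∉ span ℝ (rows q.1 '' {q.2.1}ᶜ)

lemma cardD_le_cardT (r : ℕ) (hr : r < n) :
    Nat.card {p // Dmem (n := n) r p} ≤ Nat.card {q // Tmem (n := n) r q} := by
  classical
  have key : ∀ p : {p // Dmem (n := n) r p},
      ∃ j, rows p.1.1 j ∈ span ℝ (rows p.1.1 '' {j}ᶜ) := by
    intro p
    apply exists_redundant
    intro hind
    have h1 := finrank_span_eq_card hind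
    have h2 : rk p.1.1 = r := p.2.1
    unfold rk at h2
    rw [h1] at h2
    simp at h2
    omega
  choose j hj using key
  apply Nat.card_le_card_of_injective
    (fun p => (⟨(Function.update p.1.1 (j p) p.1.2, (j p, p.1.1 (j p))), by
      constructor
      · rw [rk_update (hj p) p.2.2, p.2.1]
      · constructor
        · rw [rows_update, image_compl_update]
          exact hj p
        · rw [rows_update, image_compl_update, Function.update_self,
            ← span_range_eq_of_mem (hj p)]
          exact p.2.2⟩ : {q // Tmem (n := n) r q}))
  intro p q h
  have h' : (Function.update p.1.1 (j p) p.1.2, (j p, p.1.1 (j p))) =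
      (Function.update q.1.1 (j q) q.1.2, (j q, q.1.1 (j q))) := congrArg Subtype.val h
  have h1 : Function.update p.1.1 (j p) p.1.2 = Function.update q.1.1 (j q) q.1.2 :=
    congrArg Prod.fst h'
  have h2 : j p = j q := congrArg (fun z => z.2.1) h'
  have h3 : p.1.1 (j p) = q.1.1 (j q) := congrArg (fun z => z.2.2) h'
  apply Subtype.ext
  have hb : p.1.1 = q.1.1 := by
    funext i
    by_cases hi : i = j p
    · subst hi; rw [h3, h2]
    · have := congrFun h1 i
      rw [Function.update_of_ne hi, Function.update_of_ne (h2 ▸ hi)] at this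
      exact this
  have hy : p.1.2 = q.1.2 := by
    have := congrFun h1 (j p)
    rw [Function.update_self, h2, Function.update_self] at this
    exact this
  exact Prod.ext hb hy

end Aux

namespace Aux

variable {n : ℕ}

lemma step1 (r : ℕ) (hr : r ≤ n) :
    (2 ^ n - 2 ^ r) * Nat.card {b : Fin n → Fin n → Bool // rk b = r} ≤
      Nat.card {p // Dmem (n := n) r p} := by
  classical
  rw [Nat.card_eq_fintype_card, Nat.card_eq_fintype_card, Fintype.card_subtype,
    Fintype.card_subtype]
  rw [Finset.card_filter (fun p => Dmem r p), ← Finset.univ_product_univ, Finset.sum_product]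
  have inner : ∀ b : Fin n → Fin n → Bool,
      (if rk b = r then 2 ^ n - 2 ^ r else 0) ≤
        ∑ y : Fin n → Bool, (if Dmem r (b, y) then 1 else 0) := by
    intro b
    by_cases hb : rk b = r
    · rw [if_pos hb]
      have : ∑ y : Fin n → Bool, (if Dmem r (b, y) then 1 else 0) =
          (Finset.univ.filter
            (fun y : Fin n → Bool => signVec n y ∉ span ℝ (Set.range (rows b)))).card := by
        rw [Finset.card_filter]
        apply Finset.sum_congr rfl
        intro y _
        simp [Dmem, hb]
      rw [this]
      have hsplit := Finset.card_filter_add_card_filter_not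
        (s := (Finset.univ : Finset (Fin n → Bool)))
        (p := fun y => signVec n y ∈ span ℝ (Set.range (rows b)))
      have hmem : (Finset.univ.filter
          (fun y : Fin n → Bool => signVec n y ∈ span ℝ (Set.range (rows b)))).card ≤ 2 ^ r := by
        have := odlyzko' (n := n) (span ℝ (Set.range (rows b)))
        rwa [show finrank ℝ (span ℝ (Set.range (rows b))) = r from hb] at this
      have hcardY : (Finset.univ : Finset (Fin n → Bool)).card = 2 ^ n := by
        simp [Finset.card_univ]
      omega
    · simp [hb]
  calc (2 ^ n - 2 ^ r) * (Finset.univ.filter (fun b : Fin n → Fin n → Bool => rk b = r)).card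
      = ∑ b : Fin n → Fin n → Bool, (if rk b = r then 2 ^ n - 2 ^ r else 0) := by
        rw [← Finset.sum_filter]
        simp [Finset.sum_const, mul_comm]
    _ ≤ _ := Finset.sum_le_sum (fun b _ => inner b)

lemma step3 (r : ℕ) :
    Nat.card {q // Tmem (n := n) r q} ≤
      n * 2 ^ r * Nat.card {b : Fin n → Fin n → Bool // rk b = r + 1} := by
  classical
  rw [Nat.card_eq_fintype_card, Nat.card_eq_fintype_card, Fintype.card_subtype,
    Fintype.card_subtype]
  rw [Finset.card_filter (fun q => Tmem r q), ← Finset.univ_product_univ, Finset.sum_product]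
  have inner : ∀ b : Fin n → Fin n → Bool,
      (∑ z : Fin n × (Fin n → Bool), (if Tmem r (b, z) then 1 else 0)) ≤
        if rk b = r + 1 then n * 2 ^ r else 0 := by
    intro b
    by_cases hb : rk b = r + 1
    · rw [if_pos hb, ← Finset.univ_product_univ, Finset.sum_product]
      have hj : ∀ j : Fin n,
          (∑ x : Fin n → Bool, (if Tmem r (b, (j, x)) then 1 else 0)) ≤ 2 ^ r := by
        intro j
        by_cases hrow : rows b j ∈ span ℝ (rows b '' {j}ᶜ)
        · have : ∀ x : Fin n → Bool, ¬ Tmem r (b, (j, x)) := by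
            intro x ⟨_, _, h3⟩
            exact h3 hrow
          simp [this]
        · have hfr : finrank ℝ (span ℝ (rows b '' {j}ᶜ)) = r := by
            have := finrank_compl_of_not_mem hrow
            omega
          calc (∑ x : Fin n → Bool, (if Tmem r (b, (j, x)) then 1 else 0))
              ≤ ∑ x : Fin n → Bool,
                (if signVec n x ∈ span ℝ (rows b '' {j}ᶜ) then 1 else 0) := by
                apply Finset.sum_le_sum
                intro x _
                by_cases hx : Tmem r (b, (j, x))
                · rw [if_pos hx, if_pos hx.2.1]
                · rw [if_neg hx]; exact Nat.zero_le _
            _ = (Finset.univ.filter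
                (fun x : Fin n → Bool => signVec n x ∈ span ℝ (rows b '' {j}ᶜ))).card :=
                (Finset.card_filter _ _).symm
            _ ≤ 2 ^ r := by
                have := odlyzko' (n := n) (span ℝ (rows b '' {j}ᶜ))
                rwa [hfr] at this
      calc (∑ j : Fin n, ∑ x : Fin n → Bool, (if Tmem r (b, (j, x)) then 1 else 0))
          ≤ ∑ _j : Fin n, 2 ^ r := Finset.sum_le_sum (fun j _ => hj j)
        _ = n * 2 ^ r := by simp [Finset.sum_const, mul_comm]
    · have : ∀ z : Fin n × (Fin n → Bool), ¬ Tmem r (b, z) := by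
        intro z hz
        exact hb hz.1
      simp [this, hb]
  calc (∑ b : Fin n → Fin n → Bool, ∑ z : Fin n × (Fin n → Bool), (if Tmem r (b, z) then 1 else 0))
      ≤ ∑ b : Fin n → Fin n → Bool, (if rk b = r + 1 then n * 2 ^ r else 0) :=
        Finset.sum_le_sum (fun b _ => inner b)
    _ = n * 2 ^ r * (Finset.univ.filter (fun b : Fin n → Fin n → Bool => rk b = r + 1)).card := by
        rw [← Finset.sum_filter]
        simp [Finset.sum_const, mul_comm]

end Aux

namespace Aux

variable {n : ℕ}

lemma count_step (r : ℕ) (hr : r + 1 ≤ n) :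
    2 ^ (n - 1) * Nat.card {b : Fin n → Fin n → Bool // rk b = r} ≤
      n * 2 ^ r * Nat.card {b : Fin n → Fin n → Bool // rk b = r + 1} := by
  have h1 : 2 ^ (n - 1) ≤ 2 ^ n - 2 ^ r := by
    have h2 : 2 ^ r ≤ 2 ^ (n - 1) := Nat.pow_le_pow_right (by norm_num) (by omega)
    have h3 : 2 ^ n = 2 * 2 ^ (n - 1) := by
      rw [← pow_succ']
      congr 1
      omega
    omega
  calc 2 ^ (n - 1) * Nat.card {b : Fin n → Fin n → Bool // rk b = r}
      ≤ (2 ^ n - 2 ^ r) * Nat.card {b : Fin n → Fin n → Bool // rk b = r} :=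
        Nat.mul_le_mul_right _ h1
    _ ≤ Nat.card {p // Dmem (n := n) r p} := step1 r (by omega)
    _ ≤ Nat.card {q // Tmem (n := n) r q} := cardD_le_cardT r (by omega)
    _ ≤ _ := step3 r

lemma chain (k : ℕ) (hk : k ≤ n - 1) (hn : 1 ≤ n) :
    2 ^ (k * (k + 1) / 2) * Nat.card {b : Fin n → Fin n → Bool // rk b = n - 1 - k} ≤
      n ^ k * Nat.card {b : Fin n → Fin n → Bool // rk b = n - 1} := by
  induction k with
  | zero => simp
  | succ k ih =>
    have hk' : k ≤ n - 1 := by omega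
    have ih' := ih hk'
    have hstep := count_step (n := n) (n - 2 - k) (by omega)
    have hrw : n - 2 - k + 1 = n - 1 - k := by omega
    rw [hrw] at hstep
    have hsplit : n - 1 = (n - 2 - k) + (k + 1) := by omega
    have hA : 2 ^ (k + 1) * Nat.card {b : Fin n → Fin n → Bool // rk b = n - 2 - k} ≤
        n * Nat.card {b : Fin n → Fin n → Bool // rk b = n - 1 - k} := by
      have hpos : 0 < 2 ^ (n - 2 - k) := Nat.pow_pos (by norm_num)
      refine Nat.le_of_mul_le_mul_left ?_ hpos
      calc 2 ^ (n - 2 - k) * (2 ^ (k + 1) * Nat.card {b : Fin n → Fin n → Bool // rk b = n - 2 - k})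
            = 2 ^ (n - 1) * Nat.card {b : Fin n → Fin n → Bool // rk b = n - 2 - k} := by
              rw [hsplit, pow_add]; ring
          _ ≤ n * 2 ^ (n - 2 - k) * Nat.card {b : Fin n → Fin n → Bool // rk b = n - 1 - k} := hstep
          _ = 2 ^ (n - 2 - k) * (n * Nat.card {b : Fin n → Fin n → Bool // rk b = n - 1 - k}) := by
              ring
    have hrw2 : n - 1 - (k + 1) = n - 2 - k := by omega
    rw [hrw2]
    calc 2 ^ ((k + 1) * (k + 1 + 1) / 2) * Nat.card {b : Fin n → Fin n → Bool // rk b = n - 2 - k}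
        = 2 ^ (k * (k + 1) / 2) * (2 ^ (k + 1) * Nat.card {b : Fin n → Fin n → Bool // rk b = n - 2 - k}) := by
          rw [show (k + 1) * (k + 1 + 1) = k * (k + 1) + (k + 1) * 2 from by ring,
            Nat.add_mul_div_right _ _ (by norm_num : (0:ℕ) < 2), pow_add]
          ring
      _ ≤ 2 ^ (k * (k + 1) / 2) * (n * Nat.card {b : Fin n → Fin n → Bool // rk b = n - 1 - k}) :=
          Nat.mul_le_mul_left _ hA
      _ = n * (2 ^ (k * (k + 1) / 2) * Nat.card {b : Fin n → Fin n → Bool // rk b = n - 1 - k}) := by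
          ring
      _ ≤ n * (n ^ k * Nat.card {b : Fin n → Fin n → Bool // rk b = n - 1}) :=
          Nat.mul_le_mul_left _ ih'
      _ = n ^ (k + 1) * Nat.card {b : Fin n → Fin n → Bool // rk b = n - 1} := by
          rw [pow_succ]; ring

end Aux

namespace Aux

variable {n : ℕ}

lemma dep_eq_sum (hn : 1 ≤ n) :
    Nat.card {b : Fin n → Fin n → Bool // ¬ LinearIndependent ℝ (rows b)} =
      ∑ k ∈ Finset.range n, Nat.card {b : Fin n → Fin n → Bool // rk b = n - 1 - k} := by
  classical
  have hiff : ∀ b : Fin n → Fin n → Bool, ¬ LinearIndependent ℝ (rows b) ↔ rk b < n := by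
    intro b
    rw [indep_iff_rk]
    have := rk_le b
    omega
  rw [Nat.card_eq_fintype_card, Fintype.card_subtype]
  have h1 : (Finset.univ.filter (fun b : Fin n → Fin n → Bool => ¬ LinearIndependent ℝ (rows b))) =
      Finset.univ.filter (fun b => rk b < n) := by
    apply Finset.filter_congr
    intro b _
    simp [hiff b]
  rw [h1]
  rw [Finset.card_eq_sum_card_fiberwise (f := rk) (t := Finset.range n)
    (fun b hb => Finset.mem_range.mpr (Finset.mem_filter.mp hb).2)]
  rw [← Finset.sum_range_reflect]
  apply Finset.sum_congr rfl
  intro k hk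
  have hk' : k < n := Finset.mem_range.mp hk
  rw [Nat.card_eq_fintype_card, Fintype.card_subtype, Finset.filter_filter]
  congr 1
  apply Finset.filter_congr
  intro b _
  constructor
  · intro h
    exact h.2
  · intro h
    exact ⟨by omega, h⟩

lemma cube_le_two_pow (L : ℕ) (hL : 10 ≤ L) : L ^ 3 ≤ 2 ^ L := by
  induction L, hL using Nat.le_induction with
  | base => norm_num
  | succ L hL ih =>
    have h1 : 10 * L ^ 2 ≤ L * L ^ 2 := Nat.mul_le_mul_right _ hL
    have h2 : 10 * L ≤ L * L := Nat.mul_le_mul_right _ hL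
    have : (L + 1) ^ 3 ≤ 2 * L ^ 3 := by nlinarith
    calc (L + 1) ^ 3 ≤ 2 * L ^ 3 := this
      _ ≤ 2 * 2 ^ L := by omega
      _ = 2 ^ (L + 1) := by rw [pow_succ]; ring

end Aux

namespace Aux

lemma sum_bound (δ : ℝ) (hδ : 0 < δ) : ∃ N : ℕ, 1 ≤ N ∧ ∀ n, N ≤ n →
    (∑ k ∈ Finset.range n, (n : ℝ) ^ k / 2 ^ (k * (k + 1) / 2)) ≤ (2 : ℝ) ^ (δ * n) := by
  obtain ⟨c, hc⟩ := exists_nat_gt (1 / δ)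
  have hcpos : 0 < (c : ℝ) := lt_trans (by positivity) hc
  have hcpos' : 0 < c := by exact_mod_cast hcpos
  refine ⟨2 ^ (max (16 * c) 10), Nat.one_le_two_pow, ?_⟩
  intro n hn
  have hn1 : 1 ≤ n := le_trans Nat.one_le_two_pow hn
  set L := Nat.log 2 n with hLdef
  have hLM : max (16 * c) 10 ≤ L := Nat.le_log_of_pow_le (by norm_num) hn
  have hL10 : 10 ≤ L := le_trans (le_max_right _ _) hLM
  have hL16c : 16 * c ≤ L := le_trans (le_max_left _ _) hLM
  have hn2L : n < 2 ^ (L + 1) := Nat.lt_pow_succ_log_self (by norm_num) n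
  have h2Ln : 2 ^ L ≤ n := Nat.pow_log_le_self 2 (by omega)
  -- Step A : termwise bound
  have hA : ∀ k, (n : ℝ) ^ k / 2 ^ (k * (k + 1) / 2) ≤ (n : ℝ) ^ (2 * L) := by
    intro k
    by_cases hk : k ≤ 2 * L
    · calc (n : ℝ) ^ k / 2 ^ (k * (k + 1) / 2)
          ≤ (n : ℝ) ^ k := div_le_self (by positivity) (one_le_pow₀ (by norm_num))
        _ ≤ (n : ℝ) ^ (2 * L) := pow_le_pow_right₀ (by exact_mod_cast hn1) hk
    · push_neg at hk
      have hexp : (L + 1) * k ≤ k * (k + 1) / 2 := by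
        have h1 : k * (2 * (L + 1)) ≤ k * (k + 1) := Nat.mul_le_mul_left _ (by omega)
        have h2 : k * (2 * (L + 1)) / 2 = k * (L + 1) := by
          rw [show k * (2 * (L + 1)) = k * (L + 1) * 2 from by ring]
          exact Nat.mul_div_cancel _ (by norm_num)
        calc (L + 1) * k = k * (2 * (L + 1)) / 2 := by rw [h2]; ring
          _ ≤ k * (k + 1) / 2 := Nat.div_le_div_right h1
      have hnum : (n : ℝ) ^ k ≤ 2 ^ (k * (k + 1) / 2) := by
        calc (n : ℝ) ^ k ≤ ((2 : ℝ) ^ (L + 1)) ^ k := by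
              apply pow_le_pow_left₀ (by positivity)
              exact_mod_cast hn2L.le
          _ = (2 : ℝ) ^ ((L + 1) * k) := by rw [← pow_mul]
          _ ≤ 2 ^ (k * (k + 1) / 2) := pow_le_pow_right₀ (by norm_num) hexp
      calc (n : ℝ) ^ k / 2 ^ (k * (k + 1) / 2)
          ≤ 1 := div_le_one_of_le₀ hnum (by positivity)
        _ ≤ (n : ℝ) ^ (2 * L) := one_le_pow₀ (by exact_mod_cast hn1)
  -- Step B : sum bound
  have hB : (∑ k ∈ Finset.range n, (n : ℝ) ^ k / 2 ^ (k * (k + 1) / 2)) ≤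
      (n : ℝ) ^ (2 * L + 1) := by
    calc (∑ k ∈ Finset.range n, (n : ℝ) ^ k / 2 ^ (k * (k + 1) / 2))
        ≤ ∑ _k ∈ Finset.range n, (n : ℝ) ^ (2 * L) :=
          Finset.sum_le_sum (fun k _ => hA k)
      _ = (n : ℝ) * (n : ℝ) ^ (2 * L) := by
          rw [Finset.sum_const, Finset.card_range, nsmul_eq_mul]
      _ = (n : ℝ) ^ (2 * L + 1) := by rw [pow_succ]; ring
  -- Step C
  have hC : (n : ℝ) ^ (2 * L + 1) ≤ (2 : ℝ) ^ ((L + 1) * (2 * L + 1)) := by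
    calc (n : ℝ) ^ (2 * L + 1) ≤ ((2 : ℝ) ^ (L + 1)) ^ (2 * L + 1) := by
          apply pow_le_pow_left₀ (by positivity)
          exact_mod_cast hn2L.le
      _ = (2 : ℝ) ^ ((L + 1) * (2 * L + 1)) := by rw [← pow_mul]
  -- Step D
  have hD : (2 : ℝ) ^ ((L + 1) * (2 * L + 1)) ≤ (2 : ℝ) ^ (δ * n) := by
    rw [← Real.rpow_natCast 2 ((L + 1) * (2 * L + 1))]
    apply Real.rpow_le_rpow_of_exponent_le one_le_two
    -- ℕ estimate : c * ((L+1)*(2L+1)) ≤ 2 ^ L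
    have e1 : (L + 1) * (2 * L + 1) ≤ 6 * L ^ 2 := by nlinarith [hL10]
    have e2 : c * (6 * L ^ 2) ≤ L ^ 3 := by
      have h6 : 6 * c ≤ L := by omega
      have := Nat.mul_le_mul_right (L ^ 2) h6
      calc c * (6 * L ^ 2) = 6 * c * L ^ 2 := by ring
        _ ≤ L * L ^ 2 := this
        _ = L ^ 3 := by ring
    have e3 : c * ((L + 1) * (2 * L + 1)) ≤ 2 ^ L := by
      calc c * ((L + 1) * (2 * L + 1)) ≤ c * (6 * L ^ 2) := Nat.mul_le_mul_left _ e1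
        _ ≤ L ^ 3 := e2
        _ ≤ 2 ^ L := cube_le_two_pow L hL10
    have e3' : (c : ℝ) * ((L + 1) * (2 * L + 1) : ℕ) ≤ (2 : ℝ) ^ L := by
      exact_mod_cast e3
    have hcd : 1 / (c : ℝ) < δ := by
      rw [div_lt_iff₀ hcpos]
      rw [div_lt_iff₀ hδ] at hc
      nlinarith [hc]
    calc (((L + 1) * (2 * L + 1) : ℕ) : ℝ)
        ≤ (2 : ℝ) ^ L / c := by
          rw [le_div_iff₀ hcpos]
          nlinarith [e3']
      _ ≤ δ * (2 : ℝ) ^ L := by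
          rw [div_eq_mul_one_div]
          calc (2 : ℝ) ^ L * (1 / c) ≤ (2 : ℝ) ^ L * δ := by
                apply mul_le_mul_of_nonneg_left hcd.le (by positivity)
            _ = δ * 2 ^ L := by ring
      _ ≤ δ * n := by
          apply mul_le_mul_of_nonneg_left _ hδ.le
          exact_mod_cast h2Ln
  exact le_trans hB (le_trans hC hD)

end Aux

namespace Aux

theorem main' : ∀ δ > (0 : ℝ), ∃ N : ℕ, ∀ n ≥ N,
    (Nat.card {b : Fin n → Fin n → Bool // ¬ LinearIndependent ℝ (rows b)} : ℝ) / 2 ^ (n ^ 2) ≤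
      (2 : ℝ) ^ (δ * n) *
        ((Nat.card {b : Fin n → Fin n → Bool // rk b = n - 1} : ℝ) / 2 ^ (n ^ 2)) := by
  intro δ hδ
  obtain ⟨N, hN1, hNs⟩ := sum_bound δ hδ
  refine ⟨N, fun n hn => ?_⟩
  have hn1 : 1 ≤ n := le_trans hN1 hn
  have key : (Nat.card {b : Fin n → Fin n → Bool // ¬ LinearIndependent ℝ (rows b)} : ℝ) ≤
      (2 : ℝ) ^ (δ * n) * (Nat.card {b : Fin n → Fin n → Bool // rk b = n - 1} : ℝ) := by
    rw [dep_eq_sum hn1]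
    push_cast
    have hterm : ∀ k ∈ Finset.range n,
        (Nat.card {b : Fin n → Fin n → Bool // rk b = n - 1 - k} : ℝ) ≤
          (n : ℝ) ^ k / 2 ^ (k * (k + 1) / 2) *
            (Nat.card {b : Fin n → Fin n → Bool // rk b = n - 1} : ℝ) := by
      intro k hk
      have hk' : k < n := Finset.mem_range.mp hk
      have hch := chain (n := n) k (by omega) hn1
      have hch' : ((2 : ℝ) ^ (k * (k + 1) / 2)) *
          (Nat.card {b : Fin n → Fin n → Bool // rk b = n - 1 - k} : ℝ) ≤
            (n : ℝ) ^ k * (Nat.card {b : Fin n → Fin n → Bool // rk b = n - 1} : ℝ) := by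
        exact_mod_cast hch
      rw [div_mul_eq_mul_div, le_div_iff₀ (by positivity)]
      calc (Nat.card {b : Fin n → Fin n → Bool // rk b = n - 1 - k} : ℝ) *
            2 ^ (k * (k + 1) / 2)
          = (2 : ℝ) ^ (k * (k + 1) / 2) *
            (Nat.card {b : Fin n → Fin n → Bool // rk b = n - 1 - k} : ℝ) := by ring
        _ ≤ _ := hch'
    calc (∑ k ∈ Finset.range n, (Nat.card {b : Fin n → Fin n → Bool // rk b = n - 1 - k} : ℝ))
        ≤ ∑ k ∈ Finset.range n, (n : ℝ) ^ k / 2 ^ (k * (k + 1) / 2) *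
            (Nat.card {b : Fin n → Fin n → Bool // rk b = n - 1} : ℝ) :=
          Finset.sum_le_sum hterm
      _ = (∑ k ∈ Finset.range n, (n : ℝ) ^ k / 2 ^ (k * (k + 1) / 2)) *
            (Nat.card {b : Fin n → Fin n → Bool // rk b = n - 1} : ℝ) :=
          (Finset.sum_mul _ _ _).symm
      _ ≤ (2 : ℝ) ^ (δ * n) *
            (Nat.card {b : Fin n → Fin n → Bool // rk b = n - 1} : ℝ) := by
          apply mul_le_mul_of_nonneg_right (hNs n hn) (by positivity)
  calc (Nat.card {b : Fin n → Fin n → Bool // ¬ LinearIndependent ℝ (rows b)} : ℝ) / 2 ^ (n ^ 2)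
      ≤ ((2 : ℝ) ^ (δ * n) *
          (Nat.card {b : Fin n → Fin n → Bool // rk b = n - 1} : ℝ)) / 2 ^ (n ^ 2) := by
        gcongr
    _ = (2 : ℝ) ^ (δ * n) *
          ((Nat.card {b : Fin n → Fin n → Bool // rk b = n - 1} : ℝ) / 2 ^ (n ^ 2)) :=
        mul_div_assoc _ _ _

end Aux


/-- For independent uniform `±1` vectors `X_1, …, X_n`, the probability that they are
linearly dependent is at most `2^(δn)` times the probability that they span a hyperplane. -/
theorem prob_dependent_le_prob_span_hyperplane :
    ∀ δ > (0 : ℝ), ∃ N : ℕ, ∀ n ≥ N,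
      (Nat.card {b : Fin n → Fin n → Bool //
          ¬ LinearIndependent ℝ (fun i => signVec n (b i))} : ℝ) / 2 ^ (n ^ 2) ≤
        (2 : ℝ) ^ (δ * n) *
          ((Nat.card {b : Fin n → Fin n → Bool //
            Module.finrank ℝ (Submodule.span ℝ (Set.range fun i => signVec n (b i))) = n - 1} :
              ℝ) / 2 ^ (n ^ 2)) := by
  exact Aux.main'
end

section
/- For every δ > 0 there exists N such that for all n ≥ N, the number of degenerate non-trivial hyperplanes of ℝ^n is at most 2^{δn}. (That is, the number of degenerate non-trivial hyperplanes is N^{o(1)}, where N = 2^n.) -/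
/-- A hyperplane of `ℝ^n` is non-trivial if it is spanned by its intersection with
`{-1,1}^n`. -/
def IsNonTrivialHyperplane (n : ℕ) (V : Submodule ℝ (EuclideanSpace ℝ (Fin n))) : Prop :=
  Module.finrank ℝ V = n - 1 ∧
    V = Submodule.span ℝ {x : EuclideanSpace ℝ (Fin n) | x ∈ V ∧ ∀ i, x i = 1 ∨ x i = -1}

/-- A hyperplane of `ℝ^n` is degenerate if some nonzero normal vector has at most
`log log n` non-zero coordinates. -/
def IsDegenerateHyperplane (n : ℕ) (V : Submodule ℝ (EuclideanSpace ℝ (Fin n))) : Prop :=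
  ∃ v : EuclideanSpace ℝ (Fin n), v ≠ 0 ∧ v ∈ Vᗮ ∧
    (Nat.card {i : Fin n // v i ≠ 0} : ℝ) ≤ Real.log (Real.log n)

/-!
A hyperplane `V` with a normal `v` supported on a set `T` of at most `k = ⌊log log n⌋`
coordinates contains a point `x ∈ {-1,1}^n` or not according to the signs of `x` on `T` alone.
A non-trivial hyperplane is spanned by the points of `{-1,1}^n` it contains, so it is determined
by `T` together with the family of sign patterns on `T` realised in `V`. Hence there are at most
`(n + 1)^k * 2^(2^k) ≤ exp (3 (log n)^2)` such hyperplanes, which is `2^(o(n))`.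
-/

open Module Finset Real Filter

theorem Submodule.eq_orthogonal_span_singleton_of_finrank_eq {𝕜 E : Type*} [RCLike 𝕜]
    [NormedAddCommGroup E] [InnerProductSpace 𝕜 E] [FiniteDimensional 𝕜 E] {V : Submodule 𝕜 E}
    (hV : finrank 𝕜 V = finrank 𝕜 E - 1) {v : E} (hv : v ≠ 0) (hvV : v ∈ Vᗮ) :
    V = (𝕜 ∙ v)ᗮ := by
  refine Submodule.eq_of_le_of_finrank_eq ?_ ?_
  · exact V.le_orthogonal_orthogonal.trans
      (Submodule.orthogonal_le ((Submodule.span_singleton_le_iff_mem _ _).2 hvV))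
  · have := (𝕜 ∙ v).finrank_add_finrank_orthogonal
    rw [finrank_span_singleton hv] at this
    omega

section

variable {ι : Type*} [Fintype ι]

theorem mem_iff_of_eqOn_support {V : Submodule ℝ (EuclideanSpace ℝ ι)}
    (hV : finrank ℝ V = Fintype.card ι - 1) {v : EuclideanSpace ℝ ι} (hv : v ≠ 0) (hvV : v ∈ Vᗮ)
    {x y : EuclideanSpace ℝ ι} (hxy : ∀ i, v i ≠ 0 → x i = y i) : x ∈ V ↔ y ∈ V := by
  rw [← finrank_euclideanSpace (𝕜 := ℝ)] at hV
  rw [Submodule.eq_orthogonal_span_singleton_of_finrank_eq hV hv hvV,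
    Submodule.mem_orthogonal_singleton_iff_inner_right,
    Submodule.mem_orthogonal_singleton_iff_inner_right]
  suffices inner ℝ v x = inner ℝ v y by rw [this]
  simp only [PiLp.inner_apply, RCLike.inner_apply, conj_trivial]
  refine sum_congr rfl fun i _ => ?_
  by_cases hi : v i = 0
  · simp [hi]
  · rw [hxy i hi]

def HasSparseNormal (k : ℕ) (V : Submodule ℝ (EuclideanSpace ℝ ι)) : Prop :=
  ∃ v : EuclideanSpace ℝ ι, v ≠ 0 ∧ v ∈ Vᗮ ∧ Nat.card {i // v i ≠ 0} ≤ k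

end

section

variable {ι : Type*} [DecidableEq ι]

def signVector (S : Finset ι) : EuclideanSpace ℝ ι :=
  WithLp.toLp 2 fun i => if i ∈ S then -1 else 1

open Classical in
noncomputable def signPatterns (T : Finset ι) (V : Submodule ℝ (EuclideanSpace ℝ ι)) :
    Finset (Finset ι) :=
  {S ∈ T.powerset | signVector S ∈ V}

theorem signVector_filter_apply {T : Finset ι} {x : EuclideanSpace ℝ ι}
    (hx : ∀ i, x i = 1 ∨ x i = -1) {i : ι} (hi : i ∈ T) :
    signVector {j ∈ T | x j = -1} i = x i := by
  rcases hx i with h | h <;> norm_num [signVector, hi, h]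

theorem mem_iff_mem_signPatterns [Fintype ι] {V : Submodule ℝ (EuclideanSpace ℝ ι)}
    (hV : finrank ℝ V = Fintype.card ι - 1) {v : EuclideanSpace ℝ ι} (hv : v ≠ 0) (hvV : v ∈ Vᗮ)
    {T : Finset ι} (hvT : ∀ i, v i ≠ 0 → i ∈ T) {x : EuclideanSpace ℝ ι}
    (hx : ∀ i, x i = 1 ∨ x i = -1) :
    x ∈ V ↔ {j ∈ T | x j = -1} ∈ signPatterns T V := by
  classical
  rw [signPatterns, mem_filter, mem_powerset, and_iff_right (filter_subset _ _)]
  exact mem_iff_of_eqOn_support hV hv hvV fun i hi =>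
    (signVector_filter_apply hx (hvT i hi)).symm

end

namespace IsNonTrivialHyperplane

variable {n : ℕ} {V W : Submodule ℝ (EuclideanSpace ℝ (Fin n))}

theorem eq_of_signPatterns_eq (hV : IsNonTrivialHyperplane n V)
    (hW : IsNonTrivialHyperplane n W) {v w : EuclideanSpace ℝ (Fin n)} (hv : v ≠ 0)
    (hvV : v ∈ Vᗮ) (hw : w ≠ 0) (hwW : w ∈ Wᗮ) {T : Finset (Fin n)}
    (hvT : ∀ i, v i ≠ 0 → i ∈ T) (hwT : ∀ i, w i ≠ 0 → i ∈ T)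
    (h : signPatterns T V = signPatterns T W) : V = W := by
  rw [hV.2, hW.2]
  congr 1
  ext x
  refine and_congr_left fun hx => ?_
  rw [mem_iff_mem_signPatterns (by simpa using hV.1) hv hvV hvT hx, h,
    ← mem_iff_mem_signPatterns (by simpa using hW.1) hw hwW hwT hx]

end IsNonTrivialHyperplane

theorem Finset.card_filter_powerset_card_le_le {α : Type*} [DecidableEq α] (s : Finset α) (k : ℕ) :
    #{T ∈ s.powerset | #T ≤ k} ≤ (#s + 1) ^ k := by
  induction k with
  | zero =>
    calc #{T ∈ s.powerset | #T ≤ 0} ≤ #({∅} : Finset (Finset α)) :=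
          card_le_card fun T hT => by simp_all
      _ = (#s + 1) ^ 0 := rfl
  | succ k ih =>
    have hsub : {T ∈ s.powerset | #T ≤ k + 1} ⊆
        (s.insertNone ×ˢ {T ∈ s.powerset | #T ≤ k}).image
          fun p => p.1.elim p.2 (insert · p.2) := by
      intro T hT
      simp only [mem_filter, mem_powerset] at hT
      simp only [mem_image, mem_product, mem_filter, mem_powerset, Prod.exists]
      by_cases hk : #T ≤ k
      · exact ⟨none, T, ⟨by simp, hT.1, hk⟩, rfl⟩
      · obtain ⟨a, ha⟩ : T.Nonempty := card_pos.1 (by omega)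
        refine ⟨some a, T.erase a, ⟨by simpa using hT.1 ha, (erase_subset _ _).trans hT.1, ?_⟩,
          insert_erase ha⟩
        rw [card_erase_of_mem ha]
        omega
    calc #{T ∈ s.powerset | #T ≤ k + 1}
        ≤ #s.insertNone * #{T ∈ s.powerset | #T ≤ k} :=
          (card_le_card hsub).trans (card_image_le.trans (card_product _ _).le)
      _ ≤ (#s + 1) * (#s + 1) ^ k := by rw [card_insertNone]; gcongr
      _ = (#s + 1) ^ (k + 1) := (pow_succ' _ _).symm

theorem Finset.card_sigma_powerset_filter_card_le_le {α : Type*} [DecidableEq α]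
    (s : Finset α) (k : ℕ) :
    #({T ∈ s.powerset | #T ≤ k}.sigma fun T => T.powerset.powerset) ≤
      (#s + 1) ^ k * 2 ^ 2 ^ k :=
  calc #({T ∈ s.powerset | #T ≤ k}.sigma fun T => T.powerset.powerset)
      = ∑ T ∈ s.powerset with #T ≤ k, 2 ^ 2 ^ #T := by
        simp only [card_sigma, card_powerset]
    _ ≤ #{T ∈ s.powerset | #T ≤ k} * 2 ^ 2 ^ k :=
        sum_le_card_nsmul _ _ _ fun T hT => by
          have := (mem_filter.1 hT).2
          gcongr <;> simp
    _ ≤ (#s + 1) ^ k * 2 ^ 2 ^ k := by gcongr; exact card_filter_powerset_card_le_le s k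

theorem finite_and_card_nonTrivial_hasSparseNormal_le (n k : ℕ) :
    {V | IsNonTrivialHyperplane n V ∧ HasSparseNormal k V}.Finite ∧
      Nat.card {V // IsNonTrivialHyperplane n V ∧ HasSparseNormal k V} ≤
        (n + 1) ^ k * 2 ^ 2 ^ k := by
  classical
  have hsparse (V : {V // IsNonTrivialHyperplane n V ∧ HasSparseNormal k V}) :
      ∃ v : EuclideanSpace ℝ (Fin n), v ≠ 0 ∧ v ∈ V.1ᗮ ∧ Nat.card {i // v i ≠ 0} ≤ k :=
    V.2.2
  choose v hv hvV hvk using hsparse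
  let codes : Finset (Σ _ : Finset (Fin n), Finset (Finset (Fin n))) :=
    {T ∈ (univ : Finset (Fin n)).powerset | #T ≤ k}.sigma fun T => T.powerset.powerset
  let T (V : {V // IsNonTrivialHyperplane n V ∧ HasSparseNormal k V}) : Finset (Fin n) :=
    {i | v V i ≠ 0}
  have hvT V : ∀ i, v V i ≠ 0 → i ∈ T V := fun i hi => by simpa [T] using hi
  let code (V : {V // IsNonTrivialHyperplane n V ∧ HasSparseNormal k V}) : codes :=
    ⟨⟨T V, signPatterns (T V) V⟩, by
      refine mem_sigma.2 ⟨mem_filter.2 ⟨mem_powerset.2 (subset_univ _), ?_⟩,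
        mem_powerset.2 (filter_subset _ _)⟩
      simpa [T, Nat.card_eq_fintype_card, Fintype.card_subtype] using hvk V⟩
  have hcode : code.Injective := by
    intro V W h
    obtain ⟨hT, hS⟩ : T V = T W ∧ signPatterns (T V) V ≍ signPatterns (T W) W :=
      Sigma.mk.inj_iff.1 (Subtype.ext_iff.1 h)
    refine Subtype.ext (V.2.1.eq_of_signPatterns_eq W.2.1 (hv V) (hvV V) (hv W) (hvV W) (hvT V)
      (fun i hi => hT ▸ hvT W i hi) ((eq_of_heq hS).trans ?_))
    rw [hT]
  have : Finite {V // IsNonTrivialHyperplane n V ∧ HasSparseNormal k V} :=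
    Finite.of_injective code hcode
  exact ⟨Set.finite_coe_iff.1 this,
    (Nat.card_le_card_of_injective code hcode).trans
      ((Nat.card_eq_finsetCard codes).trans_le
        (by simpa only [card_univ, Fintype.card_fin] using
          card_sigma_powerset_filter_card_le_le (univ : Finset (Fin n)) k))⟩

theorem IsDegenerateHyperplane.hasSparseNormal {n : ℕ}
    {V : Submodule ℝ (EuclideanSpace ℝ (Fin n))} (hV : IsDegenerateHyperplane n V) :
    HasSparseNormal ⌊log (log n)⌋₊ V :=
  let ⟨v, hv, hvV, hvk⟩ := hV
  ⟨v, hv, hvV, Nat.le_floor hvk⟩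

theorem succ_pow_mul_two_pow_two_pow_le_exp {x : ℝ} (hx : 3 ≤ x) :
    (x + 1) ^ ⌊log (log x)⌋₊ * 2 ^ 2 ^ ⌊log (log x)⌋₊ ≤ exp (3 * log x ^ 2) := by
  set L := log x
  set k := ⌊log L⌋₊
  have hL : 1 ≤ L := by
    rw [le_log_iff_exp_le (by linarith)]
    linarith [exp_one_lt_d9]
  have hkL : (k : ℝ) ≤ L :=
    (Nat.floor_le (log_nonneg hL)).trans ((log_le_sub_one_of_pos (by linarith)).trans (by linarith))
  have htwo : (2 : ℝ) ≤ exp 1 := by linarith [add_one_le_exp (1 : ℝ)]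
  have hfirst : (x + 1) ^ k ≤ exp (2 * L ^ 2) :=
    calc (x + 1) ^ k ≤ (exp L ^ 2) ^ k := by
          rw [exp_log (by linarith)]; gcongr; nlinarith
      _ = exp (2 * k * L) := by rw [← pow_mul, ← exp_nat_mul]; push_cast; ring_nf
      _ ≤ exp (2 * L ^ 2) := exp_le_exp.2 (by nlinarith [k.cast_nonneg (α := ℝ)])
  have htwo_pow : ((2 ^ k : ℕ) : ℝ) ≤ L :=
    calc ((2 ^ k : ℕ) : ℝ) = 2 ^ k := by push_cast; rfl
      _ ≤ exp 1 ^ k := by gcongr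
      _ = exp k := by rw [← exp_nat_mul, mul_one]
      _ ≤ exp (log L) := exp_le_exp.2 (Nat.floor_le (log_nonneg hL))
      _ = L := exp_log (by linarith)
  have hsecond : (2 : ℝ) ^ 2 ^ k ≤ exp (L ^ 2) :=
    calc (2 : ℝ) ^ 2 ^ k ≤ exp 1 ^ 2 ^ k := by gcongr
      _ = exp ((2 ^ k : ℕ) : ℝ) := by rw [← exp_nat_mul, mul_one]
      _ ≤ exp (L ^ 2) := exp_le_exp.2 (htwo_pow.trans (by nlinarith))
  calc (x + 1) ^ k * 2 ^ 2 ^ k ≤ exp (2 * L ^ 2) * exp (L ^ 2) := by gcongr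
    _ = exp (3 * L ^ 2) := by rw [← exp_add]; ring_nf

theorem eventually_succ_pow_mul_two_pow_two_pow_le_two_rpow {δ : ℝ} (hδ : 0 < δ) :
    ∀ᶠ n : ℕ in atTop,
      ((n : ℝ) + 1) ^ ⌊log (log n)⌋₊ * 2 ^ 2 ^ ⌊log (log n)⌋₊ ≤ (2 : ℝ) ^ (δ * n) := by
  have hc : 0 < δ * log 2 / 3 := by positivity
  have hlog : ∀ᶠ x : ℝ in atTop, log x ^ 2 ≤ δ * log 2 / 3 * x := by
    filter_upwards [(isLittleO_pow_log_id_atTop (n := 2)).bound hc, eventually_ge_atTop 0]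
      with x hx hx0
    simpa [sq_abs, abs_of_nonneg hx0] using hx
  filter_upwards [tendsto_natCast_atTop_atTop.eventually hlog,
    tendsto_natCast_atTop_atTop.eventually (eventually_ge_atTop (3 : ℝ))] with n hn hn3
  calc ((n : ℝ) + 1) ^ ⌊log (log n)⌋₊ * 2 ^ 2 ^ ⌊log (log n)⌋₊ ≤ exp (3 * log n ^ 2) :=
        succ_pow_mul_two_pow_two_pow_le_exp hn3
    _ ≤ exp (log 2 * (δ * n)) := exp_le_exp.2 (by linarith)
    _ = (2 : ℝ) ^ (δ * n) := (rpow_def_of_pos two_pos _).symm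

/-- The number of degenerate non-trivial hyperplanes of `ℝ^n` is `2^(o(n))`. -/
theorem card_degenerate_nontrivial_hyperplanes :
    ∀ δ > (0 : ℝ), ∃ N : ℕ, ∀ n ≥ N,
      {V : Submodule ℝ (EuclideanSpace ℝ (Fin n)) |
          IsNonTrivialHyperplane n V ∧ IsDegenerateHyperplane n V}.Finite ∧
        (Nat.card {V : Submodule ℝ (EuclideanSpace ℝ (Fin n)) //
            IsNonTrivialHyperplane n V ∧ IsDegenerateHyperplane n V} : ℝ) ≤
          (2 : ℝ) ^ (δ * n) := by
  intro δ hδ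
  obtain ⟨N, hN⟩ := eventually_atTop.1 (eventually_succ_pow_mul_two_pow_two_pow_le_two_rpow hδ)
  refine ⟨N, fun n hn => ?_⟩
  set k := ⌊log (log n)⌋₊
  have hsub : {V | IsNonTrivialHyperplane n V ∧ IsDegenerateHyperplane n V} ⊆
      {V | IsNonTrivialHyperplane n V ∧ HasSparseNormal k V} :=
    fun V hV => ⟨hV.1, hV.2.hasSparseNormal⟩
  obtain ⟨hfin, hcard⟩ := finite_and_card_nonTrivial_hasSparseNormal_le n k
  refine ⟨hfin.subset hsub, ?_⟩
  calc (Nat.card {V // IsNonTrivialHyperplane n V ∧ IsDegenerateHyperplane n V} : ℝ)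
      ≤ ((n + 1) ^ k * 2 ^ 2 ^ k : ℕ) := by exact_mod_cast (Nat.card_mono hfin hsub).trans hcard
    _ ≤ (2 : ℝ) ^ (δ * n) := by push_cast; exact hN n hn
end

section
/- For every real θ, one has |cos θ| ≤ (15/16 + (1/16)·cos 2θ)^4. -/
theorem cos_le_lazy_pow_four (θ : ℝ) :
    |Real.cos θ| ≤ (15 / 16 + (1 / 16) * Real.cos (2 * θ)) ^ 4 := by
  rw [Real.cos_two_mul]
  set a := |Real.cos θ| with ha
  have h1 : a ≤ 1 := Real.abs_cos_le_one θ
  have h0 : 0 ≤ a := abs_nonneg _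
  have hsq : Real.cos θ ^ 2 = a ^ 2 := (sq_abs _).symm
  rw [hsq]
  nlinarith [sq_nonneg (1 - a), sq_nonneg ((1-a)*(1+a)), sq_nonneg (a^2-1), pow_nonneg h0 3, sq_nonneg a, mul_nonneg h0 h0]
end

section
/- For all real θ and θ′, one has |cos θ| · |cos θ′| ≤ (15/16 + (1/16)·cos(2(θ + θ′)))^2. -/
theorem cos_mul_cos_le_lazy_sq (θ θ' : ℝ) :
    |Real.cos θ| * |Real.cos θ'| ≤
      (15 / 16 + (1 / 16) * Real.cos (2 * (θ + θ'))) ^ 2 := by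
  have h1 := Real.cos_add θ θ'
  have h2 := Real.cos_sub θ θ'
  rw [Real.cos_two_mul]
  set c := Real.cos (θ + θ') with hc
  have habs : |Real.cos θ| * |Real.cos θ'| = |Real.cos θ * Real.cos θ'| :=
    (abs_mul _ _).symm
  rw [habs]
  have hprod : Real.cos θ * Real.cos θ' = (c + Real.cos (θ - θ')) / 2 := by
    rw [h1, h2]; ring
  rw [hprod]
  have hd1 : |Real.cos (θ - θ')| ≤ 1 := Real.abs_cos_le_one _
  have hc1 : |c| ≤ 1 := Real.abs_cos_le_one _
  have hbound : |(c + Real.cos (θ - θ')) / 2| ≤ (|c| + 1) / 2 := by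
    rw [abs_div]
    have := abs_add_le c (Real.cos (θ - θ'))
    rw [abs_of_pos (by norm_num : (0:ℝ) < 2)]
    linarith
  have hsq : |c| ^ 2 = c ^ 2 := sq_abs c
  have hnn : 0 ≤ |c| := abs_nonneg c
  nlinarith [sq_nonneg (|c| - 1), sq_nonneg (|c| + 1), sq_nonneg c,
    mul_nonneg (mul_nonneg hnn hnn) hnn, sq_nonneg (|c|^2 - 1)]
end

section
/- Fix constants δ > 0 and δ′ > 0. There exist constants a > 0 and 0 < b < 1 (depending only on δ and δ′) such that the following holds for all n ≥ 1: let W be a fixed linear subspace of ℝ^n of dimension d ≤ n−1, and let X = (ξ_1, ..., ξ_n) be a random vector whose coordinates ξ_1, ..., ξ_n are independent real random variables each satisfying: for every interval I ⊆ ℝ of length 2δ, P(ξ_i ∈ I) ≤ 1 − δ′. Then P(dist(X, W) ≤ a/√n) ≤ b^{n−d}. -/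
open MeasureTheory ProbabilityTheory Set
open scoped ProbabilityTheory ENNReal RealInnerProductSpace

lemma bourgain_map_eq_pi {Ω : Type} [MeasureSpace Ω] [IsProbabilityMeasure (ℙ : Measure Ω)]
    {n : ℕ} (ξ : Fin n → Ω → ℝ) (hmeas : ∀ i, Measurable (ξ i))
    (hind : iIndepFun ξ ℙ) :
    Measure.map (fun ω i => ξ i ω) ℙ = Measure.pi (fun i => Measure.map (ξ i) ℙ) := by
  refine (Measure.pi_eq fun s hs => ?_).symm
  rw [Measure.map_apply (measurable_pi_lambda _ hmeas) (MeasurableSet.univ_pi hs)]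
  have : (fun ω i => ξ i ω) ⁻¹' (Set.pi Set.univ s) = ⋂ i ∈ Finset.univ, ξ i ⁻¹' s i := by
    ext ω; simp [Set.mem_pi]
  rw [this, hind.measure_inter_preimage_eq_mul Finset.univ (fun i _ => hs i)]
  exact Finset.prod_congr rfl fun i _ =>
    (Measure.map_apply (hmeas i) (hs i)).symm

lemma bourgain_pi_bound {n m : ℕ} (μ : Fin n → Measure ℝ) [∀ i, IsProbabilityMeasure (μ i)]
    (σ : Fin m → Fin n) (hσ : Function.Injective σ)
    (w : Fin m → Fin n → ℝ) (R : Fin m → ℝ)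
    (hvanish : ∀ j l, l ≠ j → w j (σ l) = 0)
    (q : ℝ≥0∞)
    (hq : ∀ (j : Fin m) (c : ℝ), μ (σ j) {t : ℝ | |w j (σ j) * t + c| ≤ R j} ≤ q) :
    Measure.pi μ (⋂ j, {x : Fin n → ℝ | |∑ i, w j i * x i| ≤ R j}) ≤ q ^ m := by
  classical
  set p : Fin n → Prop := fun i => i ∈ Set.range σ with hp
  letI instS : Fintype (Subtype p) := Subtype.fintype p
  set e := MeasurableEquiv.piEquivPiSubtypeProd (fun _ : Fin n => ℝ) p with he
  have hMP := measurePreserving_piEquivPiSubtypeProd μ p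
  set A : Set (Fin n → ℝ) := ⋂ j, {x : Fin n → ℝ | |∑ i, w j i * x i| ≤ R j} with hA
  have hmeasA : MeasurableSet A := by
    refine MeasurableSet.iInter fun j => ?_
    have : Measurable fun x : Fin n → ℝ => |∑ i, w j i * x i| :=
      (Finset.measurable_sum _ fun i _ => (measurable_pi_apply i).const_mul _).abs
    exact measurableSet_le this measurable_const
  have hmeasB : MeasurableSet (e.symm ⁻¹' A) := e.symm.measurable hmeasA
  have h0 : Measure.pi μ A = Measure.map e (Measure.pi μ) (e.symm ⁻¹' A) := by
    rw [Measure.map_apply e.measurable hmeasB]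
    congr 1
    ext x
    simp [he]
  rw [h0, hMP.map_eq, Measure.prod_apply_symm hmeasB]
  set σ' : Fin m ≃ Subtype p := Equiv.ofInjective σ hσ with hσ'def
  have hσ'apply : ∀ j, ((σ' j : Subtype p) : Fin n) = σ j := fun j => rfl
  refine le_trans (lintegral_mono (g := fun _ => q ^ m) (fun z => ?_)) ?_
  · -- bound each section
    set T : Subtype p → Set ℝ := fun s =>
      {t : ℝ | |w (σ'.symm s) (σ (σ'.symm s)) * t +
        (∑ i : {i // ¬ p i}, w (σ'.symm s) i * z i)| ≤ R (σ'.symm s)} with hT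
    have hsub : ((fun y => (y, z)) ⁻¹' (e.symm ⁻¹' A)) ⊆ Set.pi Set.univ T := by
      intro y hy
      have hyA : (e.symm (y, z)) ∈ A := hy
      rw [hA, Set.mem_iInter] at hyA
      intro s _
      set j := σ'.symm s with hjdef
      have hes : ∀ i, e.symm (y, z) i = if h : p i then y ⟨i, h⟩ else z ⟨i, h⟩ := fun i => rfl
      have hsum : (∑ i, w j i * (e.symm (y, z)) i)
          = w j (σ j) * y (σ' j) + ∑ i : {i // ¬ p i}, w j i * z i := by
        rw [← Fintype.sum_subtype_add_sum_subtype p (fun i => w j i * (e.symm (y, z)) i)]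
        congr 1
        · have h2 : ∀ s' : Subtype p, w j s' * (e.symm (y, z)) s' = w j s' * y s' := by
            intro s'; rw [hes]; simp [s'.2]
          rw [Finset.sum_congr rfl fun s' _ => h2 s']
          have h3 : ∑ s' : Subtype p, w j (s' : Fin n) * y s'
              = ∑ l : Fin m, w j (σ l) * y (σ' l) :=
            (Fintype.sum_equiv σ' (fun l : Fin m => w j (σ l) * y (σ' l))
              (fun s' : Subtype p => w j (s' : Fin n) * y s')
              (fun l => by simp only [hσ'apply])).symm
          rw [h3, Finset.sum_eq_single j]
          · intro l _ hl
            simp [hvanish j l hl]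
          · simp
        · refine Finset.sum_congr rfl fun s' _ => ?_
          rw [hes]; simp [s'.2]
      have hmem := hyA j
      simp only [Set.mem_setOf_eq] at hmem
      rw [hsum] at hmem
      have hs' : σ' j = s := σ'.apply_symm_apply s
      rw [hT]
      simp only [Set.mem_setOf_eq, ← hjdef]
      rw [← hs']
      exact hmem
    refine le_trans (measure_mono hsub) ?_
    rw [Measure.pi_pi]
    have hcard : Fintype.card (Subtype p) = m :=
      (Fintype.card_congr σ'.symm).trans (Fintype.card_fin m)
    calc ∏ s : Subtype p, μ s (T s)
        ≤ ∏ _s : Subtype p, q := Finset.prod_le_prod' fun s _ => by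
          have hcoe : (s : Fin n) = σ (σ'.symm s) := by
            rw [← hσ'apply (σ'.symm s), σ'.apply_symm_apply]
          rw [hT]
          simp only
          rw [hcoe]
          exact hq (σ'.symm s) _
      _ = q ^ m := by rw [Finset.prod_const, Finset.card_univ, hcard]
  · rw [lintegral_const]
    simp

lemma bourgain_exists_vectors {n m : ℕ} (W : Submodule ℝ (EuclideanSpace ℝ (Fin n)))
    (hm : Module.finrank ℝ (Wᗮ) = m) :
    ∃ (σ : Fin m → Fin n) (w : Fin m → Fin n → ℝ),
      Function.Injective σ ∧
      (∀ j, ∀ u ∈ W, ∑ i, w j i * u i = 0) ∧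
      (∀ j l, l ≠ j → w j (σ l) = 0) ∧
      (∀ j i, |w j i| ≤ w j (σ j)) ∧
      (∀ j, 0 < w j (σ j)) := by
  classical
  let f : OrthonormalBasis (Fin m) ℝ (Wᗮ) := (stdOrthonormalBasis ℝ (Wᗮ)).reindex (finCongr hm)
  let g : Fin m → EuclideanSpace ℝ (Fin n) := fun k => (f k : EuclideanSpace ℝ (Fin n))
  have hgmem : ∀ k, g k ∈ Wᗮ := fun k => (f k).2
  have hginner : ∀ k l, ⟪g k, g l⟫ = if k = l then (1:ℝ) else 0 := by
    intro k l
    rw [← Submodule.coe_inner]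
    have := f.orthonormal
    rw [orthonormal_iff_ite] at this
    exact this k l
  have hortho : ∀ k l, (∑ i, g k i * g l i) = if k = l then (1:ℝ) else 0 := by
    intro k l
    rw [← hginner k l]
    simp [PiLp.inner_apply, RCLike.inner_apply]
    exact Finset.sum_congr rfl fun _ _ => mul_comm _ _
  set N : Fin n → (Fin m → ℝ) := fun i k => g k i with hN
  set D := (Matrix.detRowAlternating : (Fin m → ℝ) [⋀^Fin m]→ₗ[ℝ] ℝ) with hD
  -- Step 1 : some selection of rows has nonzero determinant
  have hstep1 : ∃ τ : Fin m → Fin n, D (fun k => N (τ k)) ≠ 0 := by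
    by_contra hcon
    push_neg at hcon
    have h1 : D (fun k => ∑ i, N i k • N i) = 1 := by
      have heq : (fun k => ∑ i, N i k • N i) = fun k l => if k = l then (1:ℝ) else 0 := by
        funext k l
        simp only [Finset.sum_apply, Pi.smul_apply, smul_eq_mul]
        exact hortho k l
      rw [heq]
      exact Matrix.det_one
    have h2 : D.toMultilinearMap (fun k => ∑ i, N i k • N i)
        = ∑ τ : Fin m → Fin n, D.toMultilinearMap (fun k => N (τ k) k • N (τ k)) :=
      D.toMultilinearMap.map_sum (fun k i => N i k • N i)
    simp only [AlternatingMap.coe_multilinearMap] at h2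
    rw [h2] at h1
    have h3 : ∀ τ : Fin m → Fin n, D (fun k => (N (τ k) k • N (τ k))) = 0 := by
      intro τ
      have := D.toMultilinearMap.map_smul_univ (fun k => N (τ k) k) (fun k => N (τ k))
      simp only [AlternatingMap.coe_multilinearMap] at this
      rw [this, hcon τ, smul_zero]
    rw [Finset.sum_congr rfl (fun τ _ => h3 τ), Finset.sum_const, smul_zero] at h1
    exact one_ne_zero h1.symm
  obtain ⟨τ0, hτ0⟩ := hstep1
  -- Step 2 : maximize |det| over all selections
  obtain ⟨σ, -, hmax⟩ := Finset.exists_max_image (Finset.univ : Finset (Fin m → Fin n))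
    (fun τ => |D (fun k => N (τ k))|) ⟨τ0, Finset.mem_univ _⟩
  have hmax' : ∀ τ : Fin m → Fin n, |D (fun k => N (τ k))| ≤ |D (fun k => N (σ k))| :=
    fun τ => hmax τ (Finset.mem_univ _)
  set base : Fin m → (Fin m → ℝ) := fun k => N (σ k) with hbase
  have hDpos : 0 < |D base| := lt_of_lt_of_le (abs_pos.mpr hτ0) (hmax' τ0)
  have hσinj : Function.Injective σ := by
    intro j l hjl
    by_contra hne
    have : D base = 0 := D.map_eq_zero_of_eq base (by rw [hbase]; simp only; rw [hjl]) hne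
    rw [this] at hDpos; simp at hDpos
  -- Step 3 : the vectors
  set pw : Fin m → Fin n → ℝ := fun j i => D (Function.update base j (N i)) with hpw
  have hpw_diag : ∀ j, pw j (σ j) = D base := by
    intro j
    rw [hpw]
    simp only
    rw [Function.update_eq_self]
  have hpw_vanish : ∀ j l, l ≠ j → pw j (σ l) = 0 := by
    intro j l hl
    refine D.map_eq_zero_of_eq _ (i := j) (j := l) ?_ (fun h => hl (h.symm ▸ rfl))
    rw [Function.update_self, Function.update_of_ne (fun h => hl h) ]
  have hpw_max : ∀ j i, |pw j i| ≤ |D base| := by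
    intro j i
    have heq : Function.update base j (N i) = fun k => N (Function.update σ j i k) := by
      funext k
      by_cases hk : k = j
      · subst hk; simp
      · simp [Function.update_of_ne hk, hbase]
    rw [hpw]; simp only; rw [heq]
    exact hmax' (Function.update σ j i)
  -- linear representation of pw j
  have hrep : ∀ j, ∃ z : Fin m → ℝ, ∀ i, pw j i = ∑ k, z k * N i k := by
    intro j
    refine ⟨fun k => D (Function.update base j (Pi.single k 1)), fun i => ?_⟩
    have hsingle : N i = ∑ k, N i k • (Pi.single k (1:ℝ) : Fin m → ℝ) := by
      ext l; simp [Pi.single_apply]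
    rw [hpw]
    simp only
    conv_lhs => rw [hsingle]
    have h4 := D.toMultilinearMap.map_update_sum Finset.univ j
      (fun k => N i k • (Pi.single k (1:ℝ) : Fin m → ℝ)) base
    simp only [AlternatingMap.coe_multilinearMap] at h4
    rw [h4]
    refine Finset.sum_congr rfl fun k _ => ?_
    have h5 := D.toMultilinearMap.map_update_smul base j (N i k) (Pi.single k 1)
    simp only [AlternatingMap.coe_multilinearMap] at h5
    rw [h5]
    simp [mul_comm]
  -- orthogonality
  have horth : ∀ j, ∀ u ∈ W, ∑ i, pw j i * u i = 0 := by
    intro j u hu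
    obtain ⟨z, hz⟩ := hrep j
    calc ∑ i, pw j i * u i = ∑ i, ∑ k, z k * N i k * u i := by
          refine Finset.sum_congr rfl fun i _ => ?_
          rw [hz i, Finset.sum_mul]
      _ = ∑ k, z k * ∑ i, g k i * u i := by
          rw [Finset.sum_comm]
          refine Finset.sum_congr rfl fun k _ => ?_
          rw [Finset.mul_sum]
          refine Finset.sum_congr rfl fun i _ => ?_
          rw [hN]; ring
      _ = 0 := by
          refine Finset.sum_eq_zero fun k _ => ?_
          have : ⟪g k, u⟫ = 0 := by
            have := (Submodule.mem_orthogonal' W (g k)).mp (hgmem k)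
            exact this u hu
          rw [show (∑ i, g k i * u i) = ⟪g k, u⟫ by
            simp [PiLp.inner_apply, RCLike.inner_apply]
            exact Finset.sum_congr rfl fun _ _ => mul_comm _ _, this, mul_zero]
  -- final sign adjustment
  refine ⟨σ, fun j => if pw j (σ j) < 0 then (fun i => - pw j i) else pw j, hσinj, ?_, ?_, ?_, ?_⟩
  · intro j u hu
    by_cases hs : pw j (σ j) < 0 <;> simp only [hs, if_true, if_false, ite_true, ite_false]
    · have := horth j u hu
      rw [← neg_eq_zero] at this
      rw [← this, ← Finset.sum_neg_distrib]
      exact Finset.sum_congr rfl fun i _ => by ring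
    · exact horth j u hu
  · intro j l hl
    by_cases hs : pw j (σ j) < 0 <;> simp [hs, hpw_vanish j l hl]
  · intro j i
    have h6 := hpw_max j i
    rw [← hpw_diag j] at h6
    by_cases hs : pw j (σ j) < 0 <;> simp only [hs, if_true, if_false, ite_true, ite_false]
    · rw [abs_neg]
      calc |pw j i| ≤ |pw j (σ j)| := h6
        _ = - pw j (σ j) := abs_of_neg hs
    · calc |pw j i| ≤ |pw j (σ j)| := h6
      _ = pw j (σ j) := abs_of_nonneg (not_lt.mp hs)
  · intro j
    have h7 : pw j (σ j) ≠ 0 := by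
      rw [hpw_diag j]
      intro h; rw [h] at hDpos; simp at hDpos
    by_cases hs : pw j (σ j) < 0 <;> simp only [hs, if_true, if_false, ite_true, ite_false]
    · linarith
    · rcases lt_or_eq_of_le (not_lt.mp hs) with h | h
      · exact h
      · exact absurd h.symm h7

/-- Bourgain's lemma: there are constants `a > 0` and `0 < b < 1`, depending only on
`δ, δ'`, such that for any subspace `W ⊆ ℝ^n` of dimension `d ≤ n - 1` and any random
vector `X` with independent coordinates, each of which lands in any interval of length `2δ`
with probability at most `1 - δ'`, one has `P(dist(X, W) ≤ a/√n) ≤ b^(n-d)`. -/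
theorem prob_dist_le_of_spread (δ δ' : ℝ) (hδ : 0 < δ) (hδ' : 0 < δ') :
    ∃ a > (0 : ℝ), ∃ b : ℝ, 0 < b ∧ b < 1 ∧
      ∀ n : ℕ, 1 ≤ n → ∀ d : ℕ, d ≤ n - 1 →
        ∀ W : Submodule ℝ (EuclideanSpace ℝ (Fin n)), Module.finrank ℝ W = d →
          ∀ (Ω : Type) (_ : MeasureSpace Ω) (_ : IsProbabilityMeasure (ℙ : Measure Ω))
            (ξ : Fin n → Ω → ℝ),
            (∀ i, Measurable (ξ i)) →
            iIndepFun ξ ℙ →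
            (∀ i, ∀ x : ℝ, ℙ {ω | ξ i ω ∈ Set.Icc x (x + 2 * δ)} ≤ ENNReal.ofReal (1 - δ')) →
            ℙ {ω | Metric.infDist
                (show EuclideanSpace ℝ (Fin n) from WithLp.toLp 2 (fun i => ξ i ω))
                (W : Set (EuclideanSpace ℝ (Fin n))) ≤ a / Real.sqrt n} ≤
              ENNReal.ofReal (b ^ (n - d)) := by
  classical
  refine ⟨δ, hδ, max (1 - δ') (1/2), lt_of_lt_of_le (by norm_num) (le_max_right _ _),
    max_lt (by linarith) (by norm_num), ?_⟩
  intro n hn d hd W hW Ω _ hprob ξ hmeas hind hspread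
  set m := n - d with hmdef
  have hsqrtn : (0:ℝ) < Real.sqrt n := Real.sqrt_pos.mpr (by exact_mod_cast hn)
  -- dimension of the orthogonal complement
  have hfin : Module.finrank ℝ W + Module.finrank ℝ (Wᗮ) = n := by
    rw [Submodule.finrank_add_finrank_orthogonal, finrank_euclideanSpace_fin]
  have hm : Module.finrank ℝ (Wᗮ) = m := by omega
  obtain ⟨σ, w, hinj, horth, hvanish, hbound, hpos⟩ := bourgain_exists_vectors W hm
  set r : ℝ := δ / Real.sqrt n with hrdef
  have hr : 0 < r := div_pos hδ hsqrtn
  set C : Fin m → ℝ := fun j => Real.sqrt (∑ i, (w j i)^2) with hC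
  have hCnonneg : ∀ j, 0 ≤ C j := fun j => Real.sqrt_nonneg _
  set A : Set (Fin n → ℝ) := ⋂ j, {x : Fin n → ℝ | |∑ i, w j i * x i| ≤ C j * r} with hA
  have hmeasA : MeasurableSet A := by
    refine MeasurableSet.iInter fun j => ?_
    have : Measurable fun x : Fin n → ℝ => |∑ i, w j i * x i| :=
      (Finset.measurable_sum _ fun i _ => (measurable_pi_apply i).const_mul _).abs
    exact measurableSet_le this measurable_const
  -- Cauchy-Schwarz step : the event is contained in the preimage of A
  have hsub : {ω | Metric.infDist
        (show EuclideanSpace ℝ (Fin n) from WithLp.toLp 2 (fun i => ξ i ω))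
        (W : Set (EuclideanSpace ℝ (Fin n))) ≤ δ / Real.sqrt n}
      ⊆ (fun ω i => ξ i ω) ⁻¹' A := by
    intro ω hω
    simp only [Set.mem_setOf_eq] at hω
    set x : EuclideanSpace ℝ (Fin n) := (show EuclideanSpace ℝ (Fin n) from WithLp.toLp 2 (fun i => ξ i ω))
      with hx
    rw [Set.mem_preimage, hA, Set.mem_iInter]
    intro j
    simp only [Set.mem_setOf_eq]
    -- |∑ i, w j i * x i| ≤ C j * dist x v for all v ∈ W
    have hCS : ∀ v ∈ W, |∑ i, w j i * x i| ≤ C j * dist x v := by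
      intro v hv
      have h1 : ∑ i, w j i * (x i - v i) = ∑ i, w j i * x i := by
        calc ∑ i, w j i * (x i - v i) = ∑ i, (w j i * x i - w j i * v i) :=
              Finset.sum_congr rfl fun i _ => by ring
          _ = (∑ i, w j i * x i) - (∑ i, w j i * v i) := Finset.sum_sub_distrib _ _
          _ = ∑ i, w j i * x i := by rw [horth j v hv, sub_zero]
      rw [← h1]
      have hcs2 := Finset.sum_mul_sq_le_sq_mul_sq Finset.univ (fun i => w j i)
        (fun i => x i - v i)
      have habs : |∑ i, w j i * (x i - v i)|
          ≤ Real.sqrt (∑ i, (w j i)^2) * Real.sqrt (∑ i, (x i - v i)^2) := by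
        rw [← Real.sqrt_mul_self (abs_nonneg (∑ i, w j i * (x i - v i))),
          ← Real.sqrt_mul (by positivity)]
        refine Real.sqrt_le_sqrt ?_
        rw [← abs_mul, abs_mul_self, ← pow_two]
        exact hcs2
      refine le_trans habs ?_
      have hdist : dist x v = Real.sqrt (∑ i, (x i - v i)^2) := by
        rw [EuclideanSpace.dist_eq]
        congr 1
        refine Finset.sum_congr rfl fun i _ => ?_
        rw [Real.dist_eq, sq_abs]
      rw [hdist]
    -- conclude using infDist
    have hCpos : 0 < C j := by
      rw [hC]
      refine Real.sqrt_pos.mpr ?_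
      refine lt_of_lt_of_le (pow_pos (hpos j) 2) ?_
      exact Finset.single_le_sum (f := fun i => (w j i)^2) (fun i _ => sq_nonneg _)
        (Finset.mem_univ (σ j))
    by_contra hcon
    push_neg at hcon
    have hlt : Metric.infDist x (W : Set (EuclideanSpace ℝ (Fin n)))
        < |∑ i, w j i * x i| / C j := by
      refine lt_of_le_of_lt hω ?_
      rw [lt_div_iff₀ hCpos]
      calc (δ / Real.sqrt n) * C j = C j * r := by rw [hrdef]; ring
        _ < |∑ i, w j i * x i| := hcon
    obtain ⟨v, hv, hvdist⟩ := (Metric.infDist_lt_iff ⟨0, Submodule.zero_mem W⟩).mp hlt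
    have := hCS v hv
    have : |∑ i, w j i * x i| < |∑ i, w j i * x i| := by
      calc |∑ i, w j i * x i| ≤ C j * dist x v := hCS v hv
        _ < C j * (|∑ i, w j i * x i| / C j) := by
            exact mul_lt_mul_of_pos_left hvdist hCpos
        _ = |∑ i, w j i * x i| := by field_simp
    exact absurd this (lt_irrefl _)
  -- move to the product measure
  set μ : Fin n → Measure ℝ := fun i => Measure.map (ξ i) ℙ with hμ
  haveI : ∀ i, IsProbabilityMeasure (μ i) := fun i =>
    Measure.isProbabilityMeasure_map (hmeas i).aemeasurable
  have hY : Measurable (fun ω i => ξ i ω : Ω → Fin n → ℝ) :=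
    measurable_pi_lambda _ hmeas
  have step1 : ℙ {ω | Metric.infDist
        (show EuclideanSpace ℝ (Fin n) from WithLp.toLp 2 (fun i => ξ i ω))
        (W : Set (EuclideanSpace ℝ (Fin n))) ≤ δ / Real.sqrt n}
      ≤ Measure.pi μ A := by
    refine le_trans (measure_mono hsub) ?_
    rw [← bourgain_map_eq_pi ξ hmeas hind, Measure.map_apply hY hmeasA]
  -- apply the product bound
  have hq : ∀ (j : Fin m) (c : ℝ),
      μ (σ j) {t : ℝ | |w j (σ j) * t + c| ≤ C j * r} ≤ ENNReal.ofReal (1 - δ') := by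
    intro j c
    set τ := w j (σ j) with hτ
    have hτpos : 0 < τ := hpos j
    have hCle : C j ≤ Real.sqrt n * τ := by
      rw [hC]
      have hsum : ∑ i, (w j i)^2 ≤ n * τ^2 := by
        calc ∑ i, (w j i)^2 ≤ ∑ _i : Fin n, τ^2 := by
              refine Finset.sum_le_sum fun i _ => ?_
              rw [← sq_abs]
              exact pow_le_pow_left₀ (abs_nonneg _) (hbound j i) 2
          _ = n * τ^2 := by rw [Finset.sum_const, Finset.card_univ, Fintype.card_fin,
              nsmul_eq_mul]
      refine le_trans (Real.sqrt_le_sqrt hsum) ?_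
      rw [Real.sqrt_mul (by positivity), Real.sqrt_sq hτpos.le]
    have hsubI : {t : ℝ | |τ * t + c| ≤ C j * r}
        ⊆ Set.Icc ((- (C j * r) - c)/τ) ((- (C j * r) - c)/τ + 2 * δ) := by
      intro t ht
      simp only [Set.mem_setOf_eq, abs_le] at ht
      constructor
      · rw [div_le_iff₀ hτpos]
        calc (- (C j * r) - c) ≤ τ * t := by linarith [ht.1]
          _ = t * τ := mul_comm _ _
      · have h8 : t ≤ (C j * r - c)/τ := by
          rw [le_div_iff₀ hτpos]
          calc t * τ = τ * t := mul_comm _ _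
            _ ≤ C j * r - c := by linarith [ht.2]
        refine le_trans h8 ?_
        rw [div_add' _ _ _ hτpos.ne', div_le_div_iff₀ hτpos hτpos]
        have h9 : C j * r ≤ δ * τ := by
          calc C j * r = C j * δ / Real.sqrt n := by rw [hrdef]; ring
            _ ≤ (Real.sqrt n * τ) * δ / Real.sqrt n := by gcongr
            _ = δ * τ := by field_simp
        nlinarith [hτpos, h9]
    calc μ (σ j) {t : ℝ | |τ * t + c| ≤ C j * r}
        ≤ μ (σ j) (Set.Icc ((- (C j * r) - c)/τ) ((- (C j * r) - c)/τ + 2 * δ)) :=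
          measure_mono hsubI
      _ = ℙ {ω | ξ (σ j) ω ∈ Set.Icc ((- (C j * r) - c)/τ) ((- (C j * r) - c)/τ + 2 * δ)} := by
          rw [hμ]
          rw [Measure.map_apply (hmeas (σ j)) measurableSet_Icc]
          rfl
      _ ≤ ENNReal.ofReal (1 - δ') := hspread (σ j) _
  have step2 : Measure.pi μ A ≤ (ENNReal.ofReal (1 - δ')) ^ m :=
    bourgain_pi_bound μ σ hinj w (fun j => C j * r) hvanish _ hq
  refine le_trans step1 (le_trans step2 ?_)
  have hb0 : (0:ℝ) ≤ max (1 - δ') (1/2) := le_trans (by norm_num) (le_max_right _ _)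
  calc (ENNReal.ofReal (1 - δ')) ^ m ≤ (ENNReal.ofReal (max (1 - δ') (1/2))) ^ m := by
        gcongr
        exact le_max_left _ _
    _ = ENNReal.ofReal ((max (1 - δ') (1/2)) ^ m) := by
        rw [← ENNReal.ofReal_pow hb0]
end
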